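/- arXiv:1609.08112 — 7 statements merged into one kernel-verified Lean document; each statement's English description precedes it below -/
import Mathlib

section
/- Let B be an integral domain and let A = [A^{ij}] ⊆ M_d(B) be a tiled matrix ring. Fix indices i, j, k ∈ {1,…,d} and suppose that A^{ij} ≠ 0, A^{ji} ≠ 0, and A^{ii}·1_d = Z(A). Then for every Z(A)-module homomorphism f : e_jAe_i → e_kAe_i there exists an element h ∈ Frac(B) such that for every p ∈ e_jAe_i one has \overline{f(p)} = h·p̄ in Frac(B). -/
open Matrix

/-- The corner space `e_a A e_b` of a subring `A` of a matrix ring, where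
`e_a = stdBasisMatrix a a 1` is the idempotent at index `a`. -/
def cornerSet {B : Type*} [CommRing B] {d : ℕ}
    (A : Set (Matrix (Fin d) (Fin d) B)) (a b : Fin d) :
    Set (Matrix (Fin d) (Fin d) B) :=
  {M | ∃ N ∈ A, M = Matrix.single a a 1 * N * Matrix.single b b 1}

/-- `z` is an element of the center `Z(A)`. -/
def IsCenterElt {B : Type*} [CommRing B] {d : ℕ}
    (A : Set (Matrix (Fin d) (Fin d) B)) (z : Matrix (Fin d) (Fin d) B) : Prop :=
  z ∈ A ∧ ∀ a ∈ A, z * a = a * z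

/-- `f` represents a `Z(A)`-module homomorphism `e_j A e_i → e_k A e_i`:
it maps the corner `e_j A e_i` into the corner `e_k A e_i`, is additive, and is
`Z(A)`-linear (the `Z(A)`-action being multiplication in the matrix ring). -/
def IsCornerZHom {B : Type*} [CommRing B] {d : ℕ}
    (A : Set (Matrix (Fin d) (Fin d) B)) (j i k : Fin d)
    (f : Matrix (Fin d) (Fin d) B → Matrix (Fin d) (Fin d) B) : Prop :=
  (∀ M ∈ cornerSet A j i, f M ∈ cornerSet A k i) ∧
  (∀ M ∈ cornerSet A j i, ∀ N ∈ cornerSet A j i, f (M + N) = f M + f N) ∧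
  (∀ z, IsCenterElt A z → ∀ M ∈ cornerSet A j i, f (z * M) = z * f M)

/-!
Every corner element of `e_j A e_i` is a single-entry matrix `m e_{ji}` with `m ∈ A^{ji}`, and for
`x ∈ A^{ij}` the scalar `x m` lies in `A^{ii}`, so `(x m) • 1` is central. Fix nonzero `x ∈ A^{ij}`
and `y ∈ A^{ji}`. Since `(x m) • (y e_{ji}) = (x y) • (m e_{ji})`, central linearity of `f` gives
`x m · \overline{f(y e_{ji})} = x y · \overline{f(m e_{ji})}`; cancelling `x` in the domain `B`
shows that `h = \overline{f(y e_{ji})} / y` works.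
-/

section Tiled

variable {B : Type*} [CommRing B] {d : ℕ} {T : Fin d → Fin d → AddSubgroup B}
  {A : Subring (Matrix (Fin d) (Fin d) B)}

theorem single_mem_iff_of_tiled (hA : ∀ M, M ∈ A ↔ ∀ a b, M a b ∈ T a b) {a b : Fin d}
    {c : B} : single a b c ∈ A ↔ c ∈ T a b := by
  rw [hA]
  refine ⟨fun h => by simpa using h a b, fun hc p q => ?_⟩
  by_cases hpq : a = p ∧ b = q
  · obtain ⟨rfl, rfl⟩ := hpq
    simpa using hc
  · rw [single_apply_of_ne _ _ _ _ _ hpq]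
    exact (T p q).zero_mem

theorem mul_mem_of_tiled (hA : ∀ M, M ∈ A ↔ ∀ a b, M a b ∈ T a b) {a b c : Fin d} {x y : B}
    (hx : x ∈ T a b) (hy : y ∈ T b c) : x * y ∈ T a c := by
  have hxy := A.mul_mem ((single_mem_iff_of_tiled hA).2 hx) ((single_mem_iff_of_tiled hA).2 hy)
  rwa [single_mul_single_same, single_mem_iff_of_tiled hA] at hxy

theorem mem_cornerSet_iff_of_tiled (hA : ∀ M, M ∈ A ↔ ∀ a b, M a b ∈ T a b) {a b : Fin d}
    {M : Matrix (Fin d) (Fin d) B} :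
    M ∈ cornerSet (A : Set (Matrix (Fin d) (Fin d) B)) a b ↔ ∃ m ∈ T a b, M = single a b m := by
  simp only [cornerSet, single_mul_mul_single, one_mul, mul_one]
  constructor
  · rintro ⟨N, hN, rfl⟩
    exact ⟨N a b, (hA N).1 hN a b, rfl⟩
  · rintro ⟨m, hm, rfl⟩
    exact ⟨single a b m, (single_mem_iff_of_tiled hA).2 hm, by simp⟩

end Tiled

theorem IsCornerZHom.map_smul {B : Type*} [CommRing B] {d : ℕ}
    {A : Set (Matrix (Fin d) (Fin d) B)} {j i k : Fin d}
    {f : Matrix (Fin d) (Fin d) B → Matrix (Fin d) (Fin d) B} (hf : IsCornerZHom A j i k f)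
    {s : B} (hs : IsCenterElt A (s • 1)) {M : Matrix (Fin d) (Fin d) B}
    (hM : M ∈ cornerSet A j i) : f (s • M) = s • f M := by
  simpa only [smul_one_mul] using hf.2.2 _ hs M hM

theorem IsCornerZHom.mul_apply_eq_mul_apply {B : Type*} [CommRing B] [IsDomain B] {d : ℕ}
    {T : Fin d → Fin d → AddSubgroup B} {A : Subring (Matrix (Fin d) (Fin d) B)}
    (hA : ∀ M, M ∈ A ↔ ∀ a b, M a b ∈ T a b) {i j k : Fin d}
    (hZ : ∀ s ∈ T i i, IsCenterElt (A : Set (Matrix (Fin d) (Fin d) B)) (s • 1))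
    {x : B} (hx : x ∈ T i j) (hx0 : x ≠ 0)
    {f : Matrix (Fin d) (Fin d) B → Matrix (Fin d) (Fin d) B}
    (hf : IsCornerZHom (A : Set (Matrix (Fin d) (Fin d) B)) j i k f)
    {M M' : Matrix (Fin d) (Fin d) B}
    (hM : M ∈ cornerSet (A : Set (Matrix (Fin d) (Fin d) B)) j i)
    (hM' : M' ∈ cornerSet (A : Set (Matrix (Fin d) (Fin d) B)) j i) :
    M' j i * f M k i = M j i * f M' k i := by
  obtain ⟨m, hm, rfl⟩ := (mem_cornerSet_iff_of_tiled hA).1 hM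
  obtain ⟨m', hm', rfl⟩ := (mem_cornerSet_iff_of_tiled hA).1 hM'
  have hswap : (x * m') • single j i m = (x * m) • single j i m' := by
    simp only [smul_single, smul_eq_mul]
    ring_nf
  have hf_swap := congr_arg (· k i) (congr_arg f hswap)
  simp only [hf.map_smul (hZ _ (mul_mem_of_tiled hA hx hm')) hM,
    hf.map_smul (hZ _ (mul_mem_of_tiled hA hx hm)) hM', Matrix.smul_apply, smul_eq_mul] at hf_swap
  apply mul_left_cancel₀ hx0
  simpa only [single_apply_same, mul_assoc] using hf_swap

/-- Let `B` be an integral domain and `A = [A^{ij}] ⊆ M_d(B)` a tiled matrix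
ring (the set of matrices whose `(a,b)` entry lies in the additive subgroup `T a b`).
Suppose `A^{ij} ≠ 0`, `A^{ji} ≠ 0` and `A^{ii}·1_d = Z(A)`.  Then for every `Z(A)`-module
homomorphism `f : e_j A e_i → e_k A e_i` there is some `h ∈ Frac B` such that
`\overline{f(p)} = h · p̄` for every `p ∈ e_j A e_i`. -/
theorem corner_hom_is_multiplication {B : Type*} [CommRing B] [IsDomain B] {d : ℕ}
    (T : Fin d → Fin d → AddSubgroup B)
    (A : Subring (Matrix (Fin d) (Fin d) B))
    (hA : ∀ M, M ∈ A ↔ ∀ a b, M a b ∈ T a b)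
    (i j k : Fin d)
    (hij : T i j ≠ ⊥) (hji : T j i ≠ ⊥)
    (hZ : ∀ z, IsCenterElt (A : Set (Matrix (Fin d) (Fin d) B)) z ↔
      ∃ s ∈ T i i, z = s • (1 : Matrix (Fin d) (Fin d) B))
    (f : Matrix (Fin d) (Fin d) B → Matrix (Fin d) (Fin d) B)
    (hf : IsCornerZHom (A : Set (Matrix (Fin d) (Fin d) B)) j i k f) :
    ∃ h : FractionRing B,
      ∀ M ∈ cornerSet (A : Set (Matrix (Fin d) (Fin d) B)) j i,
        algebraMap B (FractionRing B) (f M k i)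
          = h * algebraMap B (FractionRing B) (M j i) := by
  obtain ⟨x, hx, hx0⟩ := (T i j).bot_or_exists_ne_zero.resolve_left hij
  obtain ⟨y, hy, hy0⟩ := (T j i).bot_or_exists_ne_zero.resolve_left hji
  have hM₀ : single j i y ∈ cornerSet (A : Set (Matrix (Fin d) (Fin d) B)) j i :=
    (mem_cornerSet_iff_of_tiled hA).2 ⟨y, hy, rfl⟩
  have hcentral : ∀ s ∈ T i i, IsCenterElt (A : Set (Matrix (Fin d) (Fin d) B)) (s • 1) :=
    fun s hs => (hZ _).2 ⟨s, hs, rfl⟩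
  have hy0' : algebraMap B (FractionRing B) y ≠ 0 :=
    IsFractionRing.to_map_ne_zero_of_mem_nonZeroDivisors (mem_nonZeroDivisors_of_ne_zero hy0)
  refine ⟨algebraMap B _ (f (single j i y) k i) / algebraMap B _ y, fun M hM => ?_⟩
  have hcross := hf.mul_apply_eq_mul_apply hA hcentral hx hx0 hM hM₀
  rw [single_apply_same] at hcross
  rw [div_mul_eq_mul_div, eq_div_iff hy0', ← map_mul, ← map_mul, mul_comm, hcross, mul_comm]
end

section
/- Let B be an integral domain and let A = [A^{ij}] ⊆ M_d(B) be a tiled matrix ring. Fix indices i, j, k ∈ {1,…,d} and suppose that A^{ij} ≠ 0, A^{ji} ≠ 0, and A^{ii}·1_d = Z(A). Suppose moreover that there exists a nonzero p ∈ e_jAe_i such that for every Z(A)-module homomorphism f : e_jAe_i → e_kAe_i there is some r ∈ e_kAe_j satisfying f(p) = rp. Then the map e_kAe_j → Hom_{Z(A)}(e_jAe_i, e_kAe_i) sending r to the homomorphism q ↦ rq is an isomorphism of Z(A)-modules. -/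
open Matrix

/-!
In a tiled ring every corner `e_a A e_b` is `{single a b c | c ∈ A^{ab}}`, so left multiplication
by `r ∈ e_k A e_j` is injective as soon as `A^{ji}` contains a non-zero element. For surjectivity,
fix `u ≠ 0` in `A^{ij}`: for `p = single j i p̄` and `q = single j i q̄` in `e_j A e_i` the scalars
`u p̄` and `u q̄` lie in `A^{ii}`, hence in `Z(A)`, and `(u p̄) • q = (u q̄) • p`. Applying a
`Z(A)`-linear `f` with `f p = r p` gives `(u p̄) • f q = (u p̄) • (r q)`, and `u p̄ ≠ 0` cancels
because `B` is a domain.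
-/

namespace IsCornerZHom

variable {B : Type*} [CommRing B] {d : ℕ} {A : Set (Matrix (Fin d) (Fin d) B)} {j i k : Fin d}
  {f : Matrix (Fin d) (Fin d) B → Matrix (Fin d) (Fin d) B}

theorem map_smul_s1 (hf : IsCornerZHom A j i k f) {s : B} (hs : IsCenterElt A (s • 1))
    {M : Matrix (Fin d) (Fin d) B} (hM : M ∈ cornerSet A j i) : f (s • M) = s • f M := by
  simpa only [smul_one_mul] using hf.2.2 _ hs M hM

end IsCornerZHom

namespace TiledMatrixRing

variable {B : Type*} [CommRing B] {d : ℕ} {T : Fin d → Fin d → AddSubgroup B}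
  {A : Subring (Matrix (Fin d) (Fin d) B)}

theorem single_mem (hA : ∀ M, M ∈ A ↔ ∀ a b, M a b ∈ T a b) {a b : Fin d} {c : B}
    (hc : c ∈ T a b) : single a b c ∈ A := by
  rw [hA]
  intro x y
  by_cases h : a = x ∧ b = y
  · obtain ⟨rfl, rfl⟩ := h
    simpa using hc
  · rw [single_apply_of_ne (h := h)]
    exact zero_mem _

theorem mem_cornerSet_iff (hA : ∀ M, M ∈ A ↔ ∀ a b, M a b ∈ T a b) {a b : Fin d}
    {M : Matrix (Fin d) (Fin d) B} :
    M ∈ cornerSet (A : Set (Matrix (Fin d) (Fin d) B)) a b ↔ ∃ c ∈ T a b, M = single a b c := by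
  constructor
  · rintro ⟨N, hN, rfl⟩
    exact ⟨N a b, (hA N).1 hN a b, by simp⟩
  · rintro ⟨c, hc, rfl⟩
    exact ⟨single a b c, single_mem hA hc, by simp⟩

theorem mem_of_mem_cornerSet (hA : ∀ M, M ∈ A ↔ ∀ a b, M a b ∈ T a b) {a b : Fin d}
    {M : Matrix (Fin d) (Fin d) B} (hM : M ∈ cornerSet (A : Set (Matrix (Fin d) (Fin d) B)) a b) :
    M ∈ A := by
  obtain ⟨c, hc, rfl⟩ := (mem_cornerSet_iff hA).1 hM
  exact single_mem hA hc

theorem mul_mem_tile (hA : ∀ M, M ∈ A ↔ ∀ a b, M a b ∈ T a b) {a b c : Fin d} {x y : B}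
    (hx : x ∈ T a b) (hy : y ∈ T b c) : x * y ∈ T a c := by
  have := mul_mem (single_mem hA hx) (single_mem hA hy)
  rw [single_mul_single_same] at this
  simpa using (hA _).1 this a c

theorem mul_mem_cornerSet (hA : ∀ M, M ∈ A ↔ ∀ a b, M a b ∈ T a b) {a b c : Fin d}
    {r q : Matrix (Fin d) (Fin d) B}
    (hr : r ∈ cornerSet (A : Set (Matrix (Fin d) (Fin d) B)) a b)
    (hq : q ∈ cornerSet (A : Set (Matrix (Fin d) (Fin d) B)) b c) :
    r * q ∈ cornerSet (A : Set (Matrix (Fin d) (Fin d) B)) a c := by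
  obtain ⟨x, hx, rfl⟩ := (mem_cornerSet_iff hA).1 hr
  obtain ⟨y, hy, rfl⟩ := (mem_cornerSet_iff hA).1 hq
  rw [single_mul_single_same]
  exact (mem_cornerSet_iff hA).2 ⟨x * y, mul_mem_tile hA hx hy, rfl⟩

theorem isCornerZHom_mul_left (hA : ∀ M, M ∈ A ↔ ∀ a b, M a b ∈ T a b) {j i k : Fin d}
    {r : Matrix (Fin d) (Fin d) B} (hr : r ∈ cornerSet (A : Set (Matrix (Fin d) (Fin d) B)) k j) :
    IsCornerZHom (A : Set (Matrix (Fin d) (Fin d) B)) j i k (r * ·) := by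
  refine ⟨fun M hM => mul_mem_cornerSet hA hr hM, fun M _ N _ => mul_add r M N, ?_⟩
  intro z hz M _
  change r * (z * M) = z * (r * M)
  rw [← mul_assoc, ← mul_assoc, hz.2 r (mem_of_mem_cornerSet hA hr)]

theorem eq_of_mul_left_eq [NoZeroDivisors B] (hA : ∀ M, M ∈ A ↔ ∀ a b, M a b ∈ T a b)
    {j i k : Fin d} (hji : T j i ≠ ⊥) {r r' : Matrix (Fin d) (Fin d) B}
    (hr : r ∈ cornerSet (A : Set (Matrix (Fin d) (Fin d) B)) k j)
    (hr' : r' ∈ cornerSet (A : Set (Matrix (Fin d) (Fin d) B)) k j)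
    (h : ∀ q ∈ cornerSet (A : Set (Matrix (Fin d) (Fin d) B)) j i, r * q = r' * q) : r = r' := by
  obtain ⟨c, -, rfl⟩ := (mem_cornerSet_iff hA).1 hr
  obtain ⟨c', -, rfl⟩ := (mem_cornerSet_iff hA).1 hr'
  obtain ⟨x, hx, hx0⟩ := (T j i).bot_or_exists_ne_zero.resolve_left hji
  have hq := h (single j i x) ((mem_cornerSet_iff hA).2 ⟨x, hx, rfl⟩)
  have hcx : c * x = c' * x := by
    simpa using congrFun (congrFun hq k) i
  rw [mul_right_cancel₀ hx0 hcx]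

theorem eq_mul_left_of_apply_eq [IsDomain B] (hA : ∀ M, M ∈ A ↔ ∀ a b, M a b ∈ T a b)
    {i j k : Fin d} (hij : T i j ≠ ⊥)
    (hZ : ∀ s ∈ T i i, IsCenterElt (A : Set (Matrix (Fin d) (Fin d) B)) (s • 1))
    {f : Matrix (Fin d) (Fin d) B → Matrix (Fin d) (Fin d) B}
    (hf : IsCornerZHom (A : Set (Matrix (Fin d) (Fin d) B)) j i k f)
    {p r : Matrix (Fin d) (Fin d) B} (hpA : p ∈ cornerSet (A : Set (Matrix (Fin d) (Fin d) B)) j i)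
    (hp0 : p ≠ 0) (hfp : f p = r * p) :
    ∀ q ∈ cornerSet (A : Set (Matrix (Fin d) (Fin d) B)) j i, f q = r * q := by
  intro q hqA
  obtain ⟨p', hp', rfl⟩ := (mem_cornerSet_iff hA).1 hpA
  obtain ⟨q', hq', rfl⟩ := (mem_cornerSet_iff hA).1 hqA
  obtain ⟨u, hu, hu0⟩ := (T i j).bot_or_exists_ne_zero.resolve_left hij
  have hp'0 : p' ≠ 0 := by
    rintro rfl
    exact hp0 (single_zero _ _)
  have hswap : (u * p') • single j i q' = (u * q') • single j i p' := by
    rw [smul_single, smul_single, smul_eq_mul, smul_eq_mul, mul_right_comm]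
  have hcancel : (u * p') • f (single j i q') = (u * p') • (r * single j i q') :=
    calc (u * p') • f (single j i q')
        = f ((u * p') • single j i q') := (hf.map_smul_s1 (hZ _ (mul_mem_tile hA hu hp')) hqA).symm
      _ = (u * q') • f (single j i p') := by
          rw [hswap, hf.map_smul_s1 (hZ _ (mul_mem_tile hA hu hq')) hpA]
      _ = (u * p') • (r * single j i q') := by
          rw [hfp, ← mul_smul_comm, ← hswap, mul_smul_comm]
  exact smul_right_injective _ (mul_ne_zero hu0 hp'0) hcancel

end TiledMatrixRing

open TiledMatrixRing

/-- Let `B` be an integral domain and `A = [A^{ij}] ⊆ M_d(B)` a tiled matrix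
ring.  Suppose `A^{ij} ≠ 0`, `A^{ji} ≠ 0`, `A^{ii}·1_d = Z(A)`, and that there is a nonzero
`p ∈ e_j A e_i` such that every `Z(A)`-module homomorphism `f : e_j A e_i → e_k A e_i`
satisfies `f(p) = r p` for some `r ∈ e_k A e_j`.  Then the map
`e_k A e_j → Hom_{Z(A)}(e_j A e_i, e_k A e_i)`, `r ↦ (q ↦ r q)`, is an isomorphism of
`Z(A)`-modules: it is well defined (left multiplication by each `r ∈ e_k A e_j` is a
`Z(A)`-module homomorphism of the corners), injective, and surjective. -/
theorem corner_hom_left_mult_iso {B : Type*} [CommRing B] [IsDomain B] {d : ℕ}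
    (T : Fin d → Fin d → AddSubgroup B)
    (A : Subring (Matrix (Fin d) (Fin d) B))
    (hA : ∀ M, M ∈ A ↔ ∀ a b, M a b ∈ T a b)
    (i j k : Fin d)
    (hij : T i j ≠ ⊥) (hji : T j i ≠ ⊥)
    (hZ : ∀ z, IsCenterElt (A : Set (Matrix (Fin d) (Fin d) B)) z ↔
      ∃ s ∈ T i i, z = s • (1 : Matrix (Fin d) (Fin d) B))
    (hp : ∃ p ∈ cornerSet (A : Set (Matrix (Fin d) (Fin d) B)) j i, p ≠ 0 ∧
      ∀ f, IsCornerZHom (A : Set (Matrix (Fin d) (Fin d) B)) j i k f →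
        ∃ r ∈ cornerSet (A : Set (Matrix (Fin d) (Fin d) B)) k j, f p = r * p) :
    (∀ r ∈ cornerSet (A : Set (Matrix (Fin d) (Fin d) B)) k j,
      IsCornerZHom (A : Set (Matrix (Fin d) (Fin d) B)) j i k (fun q => r * q)) ∧
    (∀ r ∈ cornerSet (A : Set (Matrix (Fin d) (Fin d) B)) k j,
      ∀ r' ∈ cornerSet (A : Set (Matrix (Fin d) (Fin d) B)) k j,
        (∀ q ∈ cornerSet (A : Set (Matrix (Fin d) (Fin d) B)) j i, r * q = r' * q) →
          r = r') ∧
    (∀ f, IsCornerZHom (A : Set (Matrix (Fin d) (Fin d) B)) j i k f →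
      ∃ r ∈ cornerSet (A : Set (Matrix (Fin d) (Fin d) B)) k j,
        ∀ q ∈ cornerSet (A : Set (Matrix (Fin d) (Fin d) B)) j i, f q = r * q) := by
  obtain ⟨p, hpA, hp0, hpf⟩ := hp
  refine ⟨fun r hr => isCornerZHom_mul_left hA hr,
    fun r hr r' hr' h => eq_of_mul_left_eq hA hji hr hr' h, fun f hf => ?_⟩
  obtain ⟨r, hr, hfp⟩ := hpf f hf
  exact ⟨r, hr, eq_mul_left_of_apply_eq hA hij (fun s hs => (hZ _).2 ⟨s, hs, rfl⟩) hf hpA hp0 hfp⟩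
end

section
/- Let k be an algebraically closed field and let R ⊆ S be an inclusion of integral domains that are k-algebras. Suppose S is a depiction of R. Let p be a nonzero prime ideal of R and let q be a prime ideal of S with q ∩ R = p. If the height of q in S equals 1, then the geometric height of p equals 1, i.e., ght_R(p) = 1. -/
universe u v

/-- `S` (an integral domain and `k`-algebra) together with an injective `k`-algebra map
`f : R → S` is a depiction of `R` if `S` is a finitely generated `k`-algebra, the map
`Spec S → Spec R`, `q ↦ q ∩ R`, is surjective, and the set of maximal ideals `n` of `S`
for which the canonical map of localizations `R_{n ∩ R} → S_n` is an isomorphism equals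
the set of maximal ideals `n` of `S` for which `R_{n ∩ R}` is noetherian, this set being
nonempty. -/
def IsDepiction (k : Type v) [Field k] (R : Type u) [CommRing R] [Algebra k R]
    (S : Type u) [CommRing S] [IsDomain S] [Algebra k S] (f : R →ₐ[k] S) : Prop :=
  Function.Injective f ∧ Algebra.FiniteType k S ∧
  (∀ p : Ideal R, p.IsPrime → ∃ q : Ideal S, q.IsPrime ∧ q.comap f.toRingHom = p) ∧
  (∀ (n : Ideal S) (hn : n.IsMaximal),
    haveI : n.IsPrime := hn.isPrime
    (Function.Bijective
        (Localization.localRingHom (n.comap f.toRingHom) n f.toRingHom rfl) ↔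
      IsNoetherianRing (Localization.AtPrime (n.comap f.toRingHom)))) ∧
  (∃ (n : Ideal S) (hn : n.IsMaximal),
    haveI : n.IsPrime := hn.isPrime
    IsNoetherianRing (Localization.AtPrime (n.comap f.toRingHom)))

/-- A depiction of `R`: an integral domain `S` which is a `k`-algebra, together with a
`k`-algebra map `R → S` satisfying `IsDepiction`. -/
structure Depiction (k : Type v) [Field k] (R : Type u) [CommRing R] [Algebra k R] where
  carrier : Type u
  [commRing : CommRing carrier]
  [isDomain : IsDomain carrier]
  [algebra : Algebra k carrier]
  emb : R →ₐ[k] carrier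
  isDep : IsDepiction k R carrier emb

attribute [instance] Depiction.commRing Depiction.isDomain Depiction.algebra

/-- The geometric height of a prime ideal `p` of `R`:
`ght(p) = min { ht_{S'}(q') | S' a depiction of R, q' ∈ Spec S', q' ∩ R = p }`. -/
noncomputable def geometricHeight (k : Type v) [Field k] {R : Type u} [CommRing R]
    [Algebra k R] (p : Ideal R) : ℕ∞ :=
  sInf { n : ℕ∞ | ∃ (D : Depiction k R) (q : Ideal D.carrier) (hq : q.IsPrime),
    q.comap D.emb.toRingHom = p ∧
    Order.height (⟨q, hq⟩ : PrimeSpectrum D.carrier) = n }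

/-- suppose `S` is a depiction of `R` (both integral domains and
`k`-algebras, `k` algebraically closed).  If `p` is a nonzero prime of `R`, `q` a prime
of `S` lying over `p` (i.e. `q ∩ R = p`), and `ht_S(q) = 1`, then `ght_R(p) = 1`. -/
theorem geometricHeight_eq_one_of_height_one
    {k : Type v} [Field k] [IsAlgClosed k]
    {R S : Type u} [CommRing R] [IsDomain R] [Algebra k R]
    [CommRing S] [IsDomain S] [Algebra k S]
    (f : R →ₐ[k] S) (hdep : IsDepiction k R S f)
    (p : Ideal R) (hp : p.IsPrime) (hp0 : p ≠ ⊥)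
    (q : Ideal S) (hq : q.IsPrime) (hqp : q.comap f.toRingHom = p)
    (hht : Order.height (⟨q, hq⟩ : PrimeSpectrum S) = 1) :
    geometricHeight k p = 1 := by
  apply le_antisymm
  · apply sInf_le
    exact ⟨⟨S, f, hdep⟩, q, hq, hqp, hht⟩
  · apply le_sInf
    rintro n ⟨D, q', hq', hq'p, hn⟩
    rw [ENat.one_le_iff_ne_zero]
    rintro rfl
    rw [Order.height_eq_zero] at hn
    have hbot : q' = ⊥ := by
      have : (⟨⊥, Ideal.bot_prime⟩ : PrimeSpectrum D.carrier) = ⟨q', hq'⟩ :=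
        le_antisymm (by exact bot_le) (hn (by exact bot_le))
      exact congrArg PrimeSpectrum.asIdeal this.symm
    have : p = ⊥ := by
      rw [← hq'p, hbot]
      exact (RingHom.injective_iff_ker_eq_bot _).mp D.isDep.1
    exact hp0 this
end

section
/- Let k be a field, B = k[x,y,z,w], and S = k[xz, yz, xw, yw] ⊆ B. Let m₀ := x²zwS + xyzwS + y²zwS be the ideal of S generated by x²zw, xyzw, y²zw. Then the set of minimal primes of S over m₀ is exactly { q₁, q₂ } where q₁ := xzS + yzS and q₂ := xwS + ywS, and each of q₁ and q₂ has height 1 in S. -/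
open MvPolynomial

noncomputable section

/-- `S = k[xz, yz, xw, yw] ⊆ B = k[x,y,z,w]`, where `x = X 0`, `y = X 1`, `z = X 2`,
`w = X 3`. -/
def quadS (k : Type*) [Field k] : Subalgebra k (MvPolynomial (Fin 4) k) :=
  Algebra.adjoin k ({X 0 * X 2, X 1 * X 2, X 0 * X 3, X 1 * X 3} : Set (MvPolynomial (Fin 4) k))

/-- `xz` as an element of `S`. -/
def sxz (k : Type*) [Field k] : ↥(quadS k) :=
  ⟨X 0 * X 2, Algebra.subset_adjoin (by simp)⟩

/-- `yz` as an element of `S`. -/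
def syz (k : Type*) [Field k] : ↥(quadS k) :=
  ⟨X 1 * X 2, Algebra.subset_adjoin (by simp)⟩

/-- `xw` as an element of `S`. -/
def sxw (k : Type*) [Field k] : ↥(quadS k) :=
  ⟨X 0 * X 3, Algebra.subset_adjoin (by simp)⟩

/-- `yw` as an element of `S`. -/
def syw (k : Type*) [Field k] : ↥(quadS k) :=
  ⟨X 1 * X 3, Algebra.subset_adjoin (by simp)⟩

/-- `x²zw` as an element of `S`. -/
def sx2zw (k : Type*) [Field k] : ↥(quadS k) :=
  ⟨X 0 ^ 2 * X 2 * X 3, by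
    have h : (X 0 ^ 2 * X 2 * X 3 : MvPolynomial (Fin 4) k) = (X 0 * X 2) * (X 0 * X 3) := by
      ring
    rw [h]
    exact mul_mem (Algebra.subset_adjoin (by simp)) (Algebra.subset_adjoin (by simp))⟩

/-- `xyzw` as an element of `S`. -/
def sxyzw (k : Type*) [Field k] : ↥(quadS k) :=
  ⟨X 0 * X 1 * X 2 * X 3, by
    have h : (X 0 * X 1 * X 2 * X 3 : MvPolynomial (Fin 4) k) = (X 0 * X 2) * (X 1 * X 3) := by
      ring
    rw [h]
    exact mul_mem (Algebra.subset_adjoin (by simp)) (Algebra.subset_adjoin (by simp))⟩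

/-- `y²zw` as an element of `S`. -/
def sy2zw (k : Type*) [Field k] : ↥(quadS k) :=
  ⟨X 1 ^ 2 * X 2 * X 3, by
    have h : (X 1 ^ 2 * X 2 * X 3 : MvPolynomial (Fin 4) k) = (X 1 * X 2) * (X 1 * X 3) := by
      ring
    rw [h]
    exact mul_mem (Algebra.subset_adjoin (by simp)) (Algebra.subset_adjoin (by simp))⟩

/-- `q₁ = xzS + yzS`. -/
def q1 (k : Type*) [Field k] : Ideal ↥(quadS k) :=
  Ideal.span ({sxz k, syz k} : Set ↥(quadS k))

/-- `q₂ = xwS + ywS`. -/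
def q2 (k : Type*) [Field k] : Ideal ↥(quadS k) :=
  Ideal.span ({sxw k, syw k} : Set ↥(quadS k))

/-! The substitution `z ↦ 0` maps `S` into itself, killing `xz, yz` and fixing `xw, yw`. The two
algebra maps `f ↦ f mod q₁` and `f ↦ f(z = 0) mod q₁` agree on generators, so `q₁` is the kernel
of the substitution on the domain `S`, hence prime; likewise `q₂` with `w`. Then `m₀ = q₁ q₂`
with `q₁, q₂` incomparable, so they are its minimal primes. Finally `q₁` is minimal over `xz S`,
since `yz · xw = xz · yw` and `xw ∉ q₁`, so it has height one by Krull's principal ideal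
theorem. -/

theorem Ideal.minimalPrimes_mul_of_not_le {R : Type*} [CommRing R] {P Q : Ideal R}
    [P.IsPrime] [Q.IsPrime] (hPQ : ¬P ≤ Q) (hQP : ¬Q ≤ P) :
    (P * Q).minimalPrimes = {P, Q} := by
  have h_min {I J : Ideal R} [I.IsPrime] (hJI : ¬J ≤ I) : I ∈ (I * J).minimalPrimes := by
    refine ⟨⟨‹_›, Ideal.mul_le_left⟩, fun p ⟨hp, hIJp⟩ hpI => ?_⟩
    exact (hp.mul_le.mp hIJp).resolve_right fun hJp => hJI (hJp.trans hpI)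
  ext p
  refine ⟨fun hp => ?_, ?_⟩
  · obtain ⟨⟨hp_prime, hPQp⟩, hp_min⟩ := hp
    rcases hp_prime.mul_le.mp hPQp with hPp | hQp
    · exact Or.inl (le_antisymm (hp_min ⟨‹_›, Ideal.mul_le_left⟩ hPp) hPp)
    · exact Or.inr (le_antisymm (hp_min ⟨‹_›, Ideal.mul_le_right⟩ hQp) hQp)
  · rintro (rfl | rfl)
    · exact h_min hQP
    · rw [mul_comm]
      exact h_min hPQ

theorem Ideal.span_pair_mem_minimalPrimes_span_singleton {R : Type*} [CommRing R] {a b c d : R}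
    (hP : (Ideal.span {a, b}).IsPrime) (hc : c ∉ Ideal.span {a, b}) (hbc : b * c = a * d) :
    Ideal.span {a, b} ∈ (Ideal.span {a}).minimalPrimes := by
  refine ⟨⟨hP, Ideal.span_mono (by simp)⟩, fun p ⟨hp, hap⟩ hpP => Ideal.span_le.mpr ?_⟩
  have ha : a ∈ p := hap (Ideal.mem_span_singleton_self a)
  have hbc_mem : b * c ∈ p := hbc ▸ Ideal.mul_mem_right d p ha
  have hb : b ∈ p := (hp.mem_or_mem hbc_mem).resolve_right fun h => hc (hpP h)
  simp [Set.insert_subset_iff, ha, hb]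

theorem Ideal.height_eq_one_of_mem_minimalPrimes_span_singleton {R : Type*} [CommRing R]
    [IsNoetherianRing R] [IsDomain R] {p : Ideal R} {a : R}
    (hp : p ∈ (Ideal.span {a}).minimalPrimes) (hp0 : p ≠ ⊥) : p.height = 1 := by
  have := hp.isPrime
  refine le_antisymm (Ideal.height_le_one_of_isPrincipal_of_mem_minimalPrimes _ p hp) ?_
  simpa [Order.one_le_iff_ne_zero] using hp0

theorem AlgHom.ker_le_of_sub_mem_of_adjoin_eq_top {R S : Type*} [CommRing R] [CommRing S]
    [Algebra R S] {t : Set S} (ht : Algebra.adjoin R t = ⊤) (φ : S →ₐ[R] S) {I : Ideal S}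
    (hI : ∀ x ∈ t, x - φ x ∈ I) : RingHom.ker φ ≤ I := by
  have h_mk : Ideal.Quotient.mkₐ R I = (Ideal.Quotient.mkₐ R I).comp φ :=
    AlgHom.ext_of_adjoin_eq_top ht fun x hx =>
      (Ideal.Quotient.mk_eq_mk_iff_sub_mem _ _).mpr (hI x hx)
  intro x hx
  rw [← Ideal.Quotient.eq_zero_iff_mem, ← Ideal.Quotient.mkₐ_eq_mk R, h_mk]
  simp [RingHom.mem_ker.mp hx]

namespace quadS

variable {k : Type*} [Field k]

local notation "B" => MvPolynomial (Fin 4) k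

instance : IsNoetherianRing (quadS k) :=
  have : Algebra.FiniteType k (quadS k) := Algebra.FiniteType.adjoin_of_finite (Set.toFinite _)
  Algebra.FiniteType.isNoetherianRing k _

lemma adjoin_generators_eq_top : Algebra.adjoin k {sxz k, syz k, sxw k, syw k} = ⊤ := by
  refine (congrArg (Algebra.adjoin k) ?_).trans (Algebra.adjoin_adjoin_coe_preimage (R := k)
    (s := ({X 0 * X 2, X 1 * X 2, X 0 * X 3, X 1 * X 3} : Set B)))
  ext f
  simp only [sxz, syz, sxw, syw, Set.mem_insert_iff, Set.mem_singleton_iff, Subtype.ext_iff]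
  rfl

def substZero (j : Fin 4) : B →ₐ[k] B := aeval (Function.update X j 0)

lemma substZero_X_mul_X (j a b : Fin 4) :
    substZero j (X a * X b : B) = if a = j ∨ b = j then 0 else X a * X b := by
  by_cases ha : a = j <;> by_cases hb : b = j <;> simp [substZero, ha, hb, Function.update_of_ne]

lemma substZero_mem_quadS (j : Fin 4) {f : B} (hf : f ∈ quadS k) : substZero j f ∈ quadS k := by
  refine Algebra.adjoin_le (S := (quadS k).comap (substZero j)) ?_ hf
  rintro _ (rfl | rfl | rfl | rfl) <;>
  · rw [SetLike.mem_coe, Subalgebra.mem_comap, substZero_X_mul_X]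
    split_ifs
    · exact zero_mem _
    · exact Algebra.subset_adjoin (by simp)

def zeroVar (j : Fin 4) : quadS k →ₐ[k] quadS k :=
  ((substZero j).comp (quadS k).val).codRestrict _ fun f => substZero_mem_quadS j f.2

@[simp]
lemma coe_zeroVar (j : Fin 4) (f : quadS k) : (zeroVar j f : B) = substZero j f := rfl

lemma zeroVar_eq_zero {j a b : Fin 4} {f : quadS k} (hf : (f : B) = X a * X b)
    (h : a = j ∨ b = j) : zeroVar j f = 0 :=
  Subtype.ext (by simp [hf, substZero_X_mul_X, h])

lemma zeroVar_eq_self {j a b : Fin 4} {f : quadS k} (hf : (f : B) = X a * X b)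
    (ha : a ≠ j) (hb : b ≠ j) : zeroVar j f = f :=
  Subtype.ext (by simp [hf, substZero_X_mul_X, ha, hb])

lemma ne_zero_of_coe_eq_X_mul_X {a b : Fin 4} {f : quadS k} (hf : (f : B) = X a * X b) :
    f ≠ 0 := fun h0 => mul_ne_zero (X_ne_zero a) (X_ne_zero b) (hf ▸ congrArg Subtype.val h0)

lemma sub_zeroVar_mem {j a b : Fin 4} {f : quadS k} (hf : (f : B) = X a * X b)
    {I : Ideal (quadS k)} (hI : a = j ∨ b = j → f ∈ I) : f - zeroVar j f ∈ I := by
  by_cases h : a = j ∨ b = j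
  · rw [zeroVar_eq_zero hf h, sub_zero]
    exact hI h
  · obtain ⟨ha, hb⟩ := not_or.mp h
    rw [zeroVar_eq_self hf ha hb, sub_self]
    exact zero_mem I

lemma q1_eq_ker_zeroVar : q1 k = RingHom.ker (zeroVar (k := k) 2) := by
  refine le_antisymm (Ideal.span_le.mpr ?_)
    (AlgHom.ker_le_of_sub_mem_of_adjoin_eq_top (adjoin_generators_eq_top (k := k)) _ ?_)
  · simp only [Set.insert_subset_iff, Set.singleton_subset_iff, SetLike.mem_coe, RingHom.mem_ker]
    exact ⟨zeroVar_eq_zero rfl (.inr rfl), zeroVar_eq_zero rfl (.inr rfl)⟩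
  · simp only [Set.mem_insert_iff, Set.mem_singleton_iff]
    rintro _ (rfl | rfl | rfl | rfl) <;> refine sub_zeroVar_mem rfl fun h => ?_ <;>
      first | exact absurd h (by decide) | exact Ideal.subset_span (by simp)

lemma q2_eq_ker_zeroVar : q2 k = RingHom.ker (zeroVar (k := k) 3) := by
  refine le_antisymm (Ideal.span_le.mpr ?_)
    (AlgHom.ker_le_of_sub_mem_of_adjoin_eq_top (adjoin_generators_eq_top (k := k)) _ ?_)
  · simp only [Set.insert_subset_iff, Set.singleton_subset_iff, SetLike.mem_coe, RingHom.mem_ker]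
    exact ⟨zeroVar_eq_zero rfl (.inr rfl), zeroVar_eq_zero rfl (.inr rfl)⟩
  · simp only [Set.mem_insert_iff, Set.mem_singleton_iff]
    rintro _ (rfl | rfl | rfl | rfl) <;> refine sub_zeroVar_mem rfl fun h => ?_ <;>
      first | exact absurd h (by decide) | exact Ideal.subset_span (by simp)

lemma q1_isPrime : (q1 k).IsPrime := q1_eq_ker_zeroVar (k := k) ▸ RingHom.ker_isPrime _

lemma q2_isPrime : (q2 k).IsPrime := q2_eq_ker_zeroVar (k := k) ▸ RingHom.ker_isPrime _

lemma sxw_notMem_q1 : sxw k ∉ q1 k := by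
  rw [q1_eq_ker_zeroVar, RingHom.mem_ker, zeroVar_eq_self rfl (by decide) (by decide)]
  exact ne_zero_of_coe_eq_X_mul_X rfl

lemma sxz_notMem_q2 : sxz k ∉ q2 k := by
  rw [q2_eq_ker_zeroVar, RingHom.mem_ker, zeroVar_eq_self rfl (by decide) (by decide)]
  exact ne_zero_of_coe_eq_X_mul_X rfl

lemma sxz_mul_sxw : sxz k * sxw k = sx2zw k :=
  Subtype.ext (by simp only [MulMemClass.coe_mul, sxz, sxw, sx2zw]; ring)

lemma sxz_mul_syw : sxz k * syw k = sxyzw k :=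
  Subtype.ext (by simp only [MulMemClass.coe_mul, sxz, syw, sxyzw]; ring)

lemma syz_mul_sxw : syz k * sxw k = sxyzw k :=
  Subtype.ext (by simp only [MulMemClass.coe_mul, syz, sxw, sxyzw]; ring)

lemma syz_mul_syw : syz k * syw k = sy2zw k :=
  Subtype.ext (by simp only [MulMemClass.coe_mul, syz, syw, sy2zw]; ring)

lemma m0_eq_q1_mul_q2 :
    Ideal.span ({sx2zw k, sxyzw k, sy2zw k} : Set (quadS k)) = q1 k * q2 k := by
  rw [q1, q2, Ideal.span_mul_span']
  congr 1
  ext x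
  simp only [Set.mem_insert_iff, Set.mem_singleton_iff, Set.mem_mul, or_and_right, exists_or,
    existsAndEq, true_and, sxz_mul_sxw, sxz_mul_syw, syz_mul_sxw, syz_mul_syw]
  grind

lemma q1_height : (q1 k).height = 1 :=
  Ideal.height_eq_one_of_mem_minimalPrimes_span_singleton
    (Ideal.span_pair_mem_minimalPrimes_span_singleton q1_isPrime sxw_notMem_q1
      (syz_mul_sxw.trans sxz_mul_syw.symm))
    ((Submodule.ne_bot_iff _).mpr
      ⟨sxz k, Ideal.subset_span (by simp), ne_zero_of_coe_eq_X_mul_X rfl⟩)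

lemma q2_height : (q2 k).height = 1 :=
  Ideal.height_eq_one_of_mem_minimalPrimes_span_singleton
    (Ideal.span_pair_mem_minimalPrimes_span_singleton q2_isPrime sxz_notMem_q2
      (by rw [mul_comm, sxz_mul_syw, ← syz_mul_sxw, mul_comm]))
    ((Submodule.ne_bot_iff _).mpr
      ⟨sxw k, Ideal.subset_span (by simp), ne_zero_of_coe_eq_X_mul_X rfl⟩)

end quadS

/-- the set of minimal primes of `S` over `m₀ = x²zwS + xyzwS + y²zwS` is
exactly `{q₁, q₂}` where `q₁ = xzS + yzS` and `q₂ = xwS + ywS`, and each of `q₁`, `q₂`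
has height `1` in `S`. -/
theorem minimal_primes_of_m0 (k : Type*) [Field k] :
    ∃ (h1 : (q1 k).IsPrime) (h2 : (q2 k).IsPrime),
      (Ideal.span ({sx2zw k, sxyzw k, sy2zw k} : Set ↥(quadS k))).minimalPrimes
          = {q1 k, q2 k} ∧
      Order.height (⟨q1 k, h1⟩ : PrimeSpectrum ↥(quadS k)) = 1 ∧
      Order.height (⟨q2 k, h2⟩ : PrimeSpectrum ↥(quadS k)) = 1 := by
  have h1 := quadS.q1_isPrime (k := k)
  have h2 := quadS.q2_isPrime (k := k)
  refine ⟨h1, h2, ?_, ?_, ?_⟩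
  · rw [quadS.m0_eq_q1_mul_q2]
    exact Ideal.minimalPrimes_mul_of_not_le
      (fun h => quadS.sxz_notMem_q2 (h (Ideal.subset_span (by simp))))
      (fun h => quadS.sxw_notMem_q1 (h (Ideal.subset_span (by simp))))
  · rw [← PrimeSpectrum.height_eq_orderHeight]
    exact quadS.q1_height
  · rw [← PrimeSpectrum.height_eq_orderHeight]
    exact quadS.q2_height
end
end

section
/- Let k be a field, B = k[x,y,z,w], S = k[xz, yz, xw, yw] ⊆ B, I := xS + yS and J := zS + wS (S-submodules of B), and R := k + xzS + yzS (a k-subalgebra of S). Then the set A of all 3×3 matrices over B whose entries lie in the pattern [[S, I, zI],[J, S, zS],[S, I, R]] (that is, the (1,1),(2,2) entries range over S, the (1,2),(3,2) entries over I, the (1,3) entry over zI = xzS + yzS, the (2,1) entry over J, the (2,3) entry over zS, the (3,1) entry over S, and the (3,3) entry over R) is a unital k-subalgebra of M₃(B), and its center equals R·1₃ = { r·1₃ : r ∈ R }. -/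
open MvPolynomial

noncomputable section

/-- `I = xS + yS` as an `S`-submodule of `B`. -/
def Imod (k : Type*) [Field k] : Submodule ↥(quadS k) (MvPolynomial (Fin 4) k) :=
  Submodule.span ↥(quadS k) ({X 0, X 1} : Set (MvPolynomial (Fin 4) k))

/-- `J = zS + wS` as an `S`-submodule of `B`. -/
def Jmod (k : Type*) [Field k] : Submodule ↥(quadS k) (MvPolynomial (Fin 4) k) :=
  Submodule.span ↥(quadS k) ({X 2, X 3} : Set (MvPolynomial (Fin 4) k))

/-- `zI = xzS + yzS` as an `S`-submodule of `B`. -/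
def zImod (k : Type*) [Field k] : Submodule ↥(quadS k) (MvPolynomial (Fin 4) k) :=
  Submodule.span ↥(quadS k) ({X 0 * X 2, X 1 * X 2} : Set (MvPolynomial (Fin 4) k))

/-- `zS` as an `S`-submodule of `B`. -/
def zSmod (k : Type*) [Field k] : Submodule ↥(quadS k) (MvPolynomial (Fin 4) k) :=
  Submodule.span ↥(quadS k) ({X 2} : Set (MvPolynomial (Fin 4) k))

/-- `R = k + xzS + yzS` as a subset of `B`. -/
def Rset (k : Type*) [Field k] : Set (MvPolynomial (Fin 4) k) :=
  {b | ∃ c : k, ∃ m ∈ zImod k, b = algebraMap k (MvPolynomial (Fin 4) k) c + m}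

/-- The set of `3 × 3` matrices over `B` with entry pattern `[[S, I, zI], [J, S, zS], [S, I, R]]`. -/
def A3set (k : Type*) [Field k] : Set (Matrix (Fin 3) (Fin 3) (MvPolynomial (Fin 4) k)) :=
  {M | M 0 0 ∈ quadS k ∧ M 0 1 ∈ Imod k ∧ M 0 2 ∈ zImod k ∧
       M 1 0 ∈ Jmod k ∧ M 1 1 ∈ quadS k ∧ M 1 2 ∈ zSmod k ∧
       M 2 0 ∈ quadS k ∧ M 2 1 ∈ Imod k ∧ M 2 2 ∈ Rset k}

namespace A3aux
variable {k : Type*} [Field k]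

lemma hxz : (X 0 * X 2 : MvPolynomial (Fin 4) k) ∈ quadS k := Algebra.subset_adjoin (by simp)
lemma hyz : (X 1 * X 2 : MvPolynomial (Fin 4) k) ∈ quadS k := Algebra.subset_adjoin (by simp)
lemma hxw : (X 0 * X 3 : MvPolynomial (Fin 4) k) ∈ quadS k := Algebra.subset_adjoin (by simp)
lemma hyw : (X 1 * X 3 : MvPolynomial (Fin 4) k) ∈ quadS k := Algebra.subset_adjoin (by simp)

/-- s * b ∈ P when s ∈ S, b ∈ P. -/
lemma smulP {P : Submodule ↥(quadS k) (MvPolynomial (Fin 4) k)} {s b : MvPolynomial (Fin 4) k}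
    (hs : s ∈ quadS k) (hb : b ∈ P) : s * b ∈ P := P.smul_mem ⟨s, hs⟩ hb

lemma mulSP {P : Submodule ↥(quadS k) (MvPolynomial (Fin 4) k)} {s b : MvPolynomial (Fin 4) k}
    (hb : b ∈ P) (hs : s ∈ quadS k) : b * s ∈ P := mul_comm s b ▸ smulP hs hb

lemma spanMul {P : Submodule ↥(quadS k) (MvPolynomial (Fin 4) k)} {a b : MvPolynomial (Fin 4) k}
    {sa tb : Set (MvPolynomial (Fin 4) k)}
    (ha : a ∈ Submodule.span ↥(quadS k) sa) (hb : b ∈ Submodule.span ↥(quadS k) tb)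
    (h : ∀ p ∈ sa, ∀ q ∈ tb, p * q ∈ P) : a * b ∈ P := by
  have := Submodule.mul_mem_mul ha hb
  rw [Submodule.span_mul_span] at this
  refine Submodule.span_le.2 ?_ this
  rintro _ ⟨p, hp, q, hq, rfl⟩
  exact h p hp q hq

lemma zI_le_S {a : MvPolynomial (Fin 4) k} (ha : a ∈ zImod k) : a ∈ quadS k := by
  induction ha using Submodule.span_induction with
  | mem p hp => rcases hp with h | h <;> subst h
                · exact hxz
                · exact hyz
  | zero => exact zero_mem _
  | add _ _ _ _ h1 h2 => exact add_mem h1 h2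
  | smul s b _ hb => exact mul_mem s.2 hb
end A3aux
namespace A3aux
variable {k : Type*} [Field k]

lemma x_mem_I : (X 0 : MvPolynomial (Fin 4) k) ∈ Imod k := Submodule.subset_span (by simp)
lemma y_mem_I : (X 1 : MvPolynomial (Fin 4) k) ∈ Imod k := Submodule.subset_span (by simp)
lemma z_mem_zS : (X 2 : MvPolynomial (Fin 4) k) ∈ zSmod k := Submodule.subset_span (by simp)
lemma xz_mem_zI : (X 0 * X 2 : MvPolynomial (Fin 4) k) ∈ zImod k := Submodule.subset_span (by simp)
lemma yz_mem_zI : (X 1 * X 2 : MvPolynomial (Fin 4) k) ∈ zImod k := Submodule.subset_span (by simp)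

def Smod (k : Type*) [Field k] : Submodule ↥(quadS k) (MvPolynomial (Fin 4) k) :=
  Submodule.span ↥(quadS k) ({1} : Set (MvPolynomial (Fin 4) k))

lemma Smod_le {a : MvPolynomial (Fin 4) k} (ha : a ∈ Smod k) : a ∈ quadS k := by
  induction ha using Submodule.span_induction with
  | mem p hp => rw [Set.mem_singleton_iff] at hp; subst hp; exact one_mem _
  | zero => exact zero_mem _
  | add _ _ _ _ h1 h2 => exact add_mem h1 h2
  | smul s _ _ hb => exact mul_mem s.2 hb

lemma mem_Smod {a : MvPolynomial (Fin 4) k} (ha : a ∈ quadS k) : a ∈ Smod k := by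
  have h := (Smod k).smul_mem ⟨a, ha⟩ (Submodule.subset_span (Set.mem_singleton 1))
  have h1 : ((⟨a, ha⟩ : ↥(quadS k)) • (1 : MvPolynomial (Fin 4) k)) = a := by
    show a * 1 = a; ring
  rwa [h1] at h

lemma IJ_S {a b : MvPolynomial (Fin 4) k} (ha : a ∈ Imod k) (hb : b ∈ Jmod k) :
    a * b ∈ quadS k := by
  refine Smod_le (spanMul ha hb ?_)
  rintro p (h|h) q (h'|h') <;> subst h <;> subst h'
  · exact mem_Smod hxz
  · exact mem_Smod hxw
  · exact mem_Smod hyz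
  · exact mem_Smod hyw

lemma JI_S {a b : MvPolynomial (Fin 4) k} (ha : a ∈ Jmod k) (hb : b ∈ Imod k) : a * b ∈ quadS k := by
  rw [mul_comm]; exact IJ_S hb ha

lemma zII_I {a b : MvPolynomial (Fin 4) k} (ha : a ∈ zImod k) (hb : b ∈ Imod k) : a * b ∈ Imod k :=
  spanMul ha hb (by
    rintro p (h|h) q (h'|h') <;> subst h <;> subst h' <;>
      [exact smulP hxz x_mem_I; exact smulP hxz y_mem_I; exact smulP hyz x_mem_I;
       exact smulP hyz y_mem_I])

lemma IzS_zI {a b : MvPolynomial (Fin 4) k} (ha : a ∈ Imod k) (hb : b ∈ zSmod k) :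
    a * b ∈ zImod k :=
  spanMul ha hb (by
    rintro p (h|h) q h' <;> subst h <;> subst h'
    · exact xz_mem_zI
    · exact yz_mem_zI)

lemma zIzI_zI {a b : MvPolynomial (Fin 4) k} (ha : a ∈ zImod k) (hb : b ∈ zImod k) :
    a * b ∈ zImod k :=
  spanMul ha hb (by
    rintro p (h|h) q (h'|h') <;> subst h <;> subst h' <;>
      [exact smulP hxz xz_mem_zI; exact smulP hxz yz_mem_zI; exact smulP hyz xz_mem_zI;
       exact smulP hyz yz_mem_zI])

lemma JzI_zS {a b : MvPolynomial (Fin 4) k} (ha : a ∈ Jmod k) (hb : b ∈ zImod k) :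
    a * b ∈ zSmod k :=
  spanMul ha hb (by
    rintro p (h|h) q (h'|h') <;> subst h <;> subst h'
    · have : (X 2 : MvPolynomial (Fin 4) k) * (X 0 * X 2) = (X 0 * X 2) * X 2 := by ring
      rw [this]; exact smulP hxz z_mem_zS
    · have : (X 2 : MvPolynomial (Fin 4) k) * (X 1 * X 2) = (X 1 * X 2) * X 2 := by ring
      rw [this]; exact smulP hyz z_mem_zS
    · have : (X 3 : MvPolynomial (Fin 4) k) * (X 0 * X 2) = (X 0 * X 3) * X 2 := by ring
      rw [this]; exact smulP hxw z_mem_zS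
    · have : (X 3 : MvPolynomial (Fin 4) k) * (X 1 * X 2) = (X 1 * X 3) * X 2 := by ring
      rw [this]; exact smulP hyw z_mem_zS)

-- Rset lemmas
lemma R_zero : (0 : MvPolynomial (Fin 4) k) ∈ Rset k := ⟨0, 0, zero_mem _, by simp⟩
lemma R_algebraMap (c : k) : algebraMap k (MvPolynomial (Fin 4) k) c ∈ Rset k :=
  ⟨c, 0, zero_mem _, by simp⟩
lemma R_one : (1 : MvPolynomial (Fin 4) k) ∈ Rset k := by
  simpa using R_algebraMap (1 : k)
lemma R_sub_S {b : MvPolynomial (Fin 4) k} (hb : b ∈ Rset k) : b ∈ quadS k := by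
  obtain ⟨c, m, hm, rfl⟩ := hb
  exact add_mem (Subalgebra.algebraMap_mem _ c) (zI_le_S hm)
lemma R_add {a b : MvPolynomial (Fin 4) k} (ha : a ∈ Rset k) (hb : b ∈ Rset k) :
    a + b ∈ Rset k := by
  obtain ⟨c, m, hm, rfl⟩ := ha
  obtain ⟨c', m', hm', rfl⟩ := hb
  exact ⟨c + c', m + m', add_mem hm hm', by rw [map_add]; ring⟩
lemma zI_mem_R {m : MvPolynomial (Fin 4) k} (hm : m ∈ zImod k) : m ∈ Rset k :=
  ⟨0, m, hm, by simp⟩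
lemma zI_add_R {m r : MvPolynomial (Fin 4) k} (hm : m ∈ zImod k) (hr : r ∈ Rset k) :
    m + r ∈ Rset k := R_add (zI_mem_R hm) hr
lemma R_mul {a b : MvPolynomial (Fin 4) k} (ha : a ∈ Rset k) (hb : b ∈ Rset k) :
    a * b ∈ Rset k := by
  obtain ⟨c, m, hm, rfl⟩ := ha
  obtain ⟨c', m', hm', rfl⟩ := hb
  refine ⟨c * c', algebraMap k _ c * m' + m * algebraMap k _ c' + m * m',
    add_mem (add_mem (smulP (Subalgebra.algebraMap_mem _ c) hm')
      (mulSP hm (Subalgebra.algebraMap_mem _ c'))) (zIzI_zI hm hm'), by rw [map_mul]; ring⟩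
lemma zI_mul_R {a r : MvPolynomial (Fin 4) k} (ha : a ∈ zImod k) (hr : r ∈ Rset k) :
    a * r ∈ zImod k := by
  obtain ⟨c, m, hm, rfl⟩ := hr
  rw [mul_add]
  exact add_mem (mulSP ha (Subalgebra.algebraMap_mem _ c)) (zIzI_zI ha hm)
lemma zS_mul_R {a r : MvPolynomial (Fin 4) k} (ha : a ∈ zSmod k) (hr : r ∈ Rset k) :
    a * r ∈ zSmod k := mulSP ha (R_sub_S hr)
lemma R_mul_I {r b : MvPolynomial (Fin 4) k} (hr : r ∈ Rset k) (hb : b ∈ Imod k) :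
    r * b ∈ Imod k := smulP (R_sub_S hr) hb
end A3aux

lemma A3aux.zS_le_J {k : Type*} [Field k] {a : MvPolynomial (Fin 4) k} (ha : a ∈ zSmod k) :
    a ∈ Jmod k := Submodule.span_mono (by simp) ha

open A3aux

def A3alg (k : Type*) [Field k] : Subalgebra k (Matrix (Fin 3) (Fin 3) (MvPolynomial (Fin 4) k)) where
  carrier := A3set k
  zero_mem' := ⟨zero_mem _, zero_mem _, zero_mem _, zero_mem _, zero_mem _, zero_mem _,
    zero_mem _, zero_mem _, R_zero⟩
  one_mem' := by
    refine ⟨?_, ?_, ?_, ?_, ?_, ?_, ?_, ?_, ?_⟩ <;>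
      simp only [Matrix.one_apply, if_pos rfl, if_neg (by decide : ¬((0:Fin 3) = 1)),
        if_neg (by decide : ¬((0:Fin 3) = 2)), if_neg (by decide : ¬((1:Fin 3) = 0)),
        if_neg (by decide : ¬((1:Fin 3) = 2)), if_neg (by decide : ¬((2:Fin 3) = 0)),
        if_neg (by decide : ¬((2:Fin 3) = 1))]
    · exact one_mem _
    · exact zero_mem _
    · exact zero_mem _
    · exact zero_mem _
    · exact one_mem _
    · exact zero_mem _
    · exact zero_mem _
    · exact zero_mem _
    · exact R_one
  add_mem' := by
    rintro M N ⟨hM00, hM01, hM02, hM10, hM11, hM12, hM20, hM21, hM22⟩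
      ⟨hN00, hN01, hN02, hN10, hN11, hN12, hN20, hN21, hN22⟩
    exact ⟨add_mem hM00 hN00, add_mem hM01 hN01, add_mem hM02 hN02, add_mem hM10 hN10,
      add_mem hM11 hN11, add_mem hM12 hN12, add_mem hM20 hN20, add_mem hM21 hN21,
      R_add hM22 hN22⟩
  algebraMap_mem' := by
    intro c
    refine ⟨?_, ?_, ?_, ?_, ?_, ?_, ?_, ?_, ?_⟩ <;>
      simp only [Matrix.algebraMap_matrix_apply, if_pos rfl,
        if_neg (by decide : ¬((0:Fin 3) = 1)), if_neg (by decide : ¬((0:Fin 3) = 2)),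
        if_neg (by decide : ¬((1:Fin 3) = 0)), if_neg (by decide : ¬((1:Fin 3) = 2)),
        if_neg (by decide : ¬((2:Fin 3) = 0)), if_neg (by decide : ¬((2:Fin 3) = 1))]
    · exact Subalgebra.algebraMap_mem _ c
    · exact zero_mem _
    · exact zero_mem _
    · exact zero_mem _
    · exact Subalgebra.algebraMap_mem _ c
    · exact zero_mem _
    · exact zero_mem _
    · exact zero_mem _
    · exact R_algebraMap c
  mul_mem' := by
    rintro M N ⟨hM00, hM01, hM02, hM10, hM11, hM12, hM20, hM21, hM22⟩
      ⟨hN00, hN01, hN02, hN10, hN11, hN12, hN20, hN21, hN22⟩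
    have e : ∀ i j : Fin 3, (M * N) i j = M i 0 * N 0 j + M i 1 * N 1 j + M i 2 * N 2 j := by
      intro i j; rw [Matrix.mul_apply, Fin.sum_univ_three]
    refine ⟨?_, ?_, ?_, ?_, ?_, ?_, ?_, ?_, ?_⟩ <;> rw [e]
    · exact add_mem (add_mem (mul_mem hM00 hN00) (IJ_S hM01 hN10))
        (mul_mem (zI_le_S hM02) hN20)
    · exact add_mem (add_mem (smulP hM00 hN01) (mulSP hM01 hN11)) (zII_I hM02 hN21)
    · exact add_mem (add_mem (smulP hM00 hN02) (IzS_zI hM01 hN12)) (zI_mul_R hM02 hN22)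
    · exact add_mem (add_mem (mulSP hM10 hN00) (smulP hM11 hN10))
        (mulSP (zS_le_J hM12) hN20)
    · exact add_mem (add_mem (JI_S hM10 hN01) (mul_mem hM11 hN11))
        (JI_S (zS_le_J hM12) hN21)
    · exact add_mem (add_mem (JzI_zS hM10 hN02) (smulP hM11 hN12)) (zS_mul_R hM12 hN22)
    · exact add_mem (add_mem (mul_mem hM20 hN00) (IJ_S hM21 hN10))
        (mul_mem (R_sub_S hM22) hN20)
    · exact add_mem (add_mem (smulP hM20 hN01) (mulSP hM21 hN11)) (R_mul_I hM22 hN21)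
    · exact zI_add_R (add_mem (smulP hM20 hN02) (IzS_zI hM21 hN12)) (R_mul hM22 hN22)


/-- the set of matrices with entry pattern `[[S, I, zI], [J, S, zS], [S, I, R]]`
is a unital `k`-subalgebra of `M₃(B)`, and its center equals `R·1₃`. -/
theorem A3_subalgebra_center (k : Type*) [Field k] :
    ∃ 𝒜 : Subalgebra k (Matrix (Fin 3) (Fin 3) (MvPolynomial (Fin 4) k)),
      (𝒜 : Set (Matrix (Fin 3) (Fin 3) (MvPolynomial (Fin 4) k))) = A3set k ∧
      {M | M ∈ 𝒜 ∧ ∀ N ∈ 𝒜, M * N = N * M}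
        = {M | ∃ r ∈ Rset k,
            M = r • (1 : Matrix (Fin 3) (Fin 3) (MvPolynomial (Fin 4) k))} := by
  refine ⟨A3alg k, rfl, ?_⟩
  ext M
  simp only [Set.mem_setOf_eq]
  constructor
  · rintro ⟨hM, hc⟩
    obtain ⟨h00, h01, h02, h10, h11, h12, h20, h21, h22⟩ := hM
    -- test matrix 1 : x in position (0,1)
    have hN1 : (Matrix.single 0 1 (X 0) :
        Matrix (Fin 3) (Fin 3) (MvPolynomial (Fin 4) k)) ∈ A3alg k := by
      refine ⟨?_, ?_, ?_, ?_, ?_, ?_, ?_, ?_, ?_⟩ <;> simp [Matrix.single] <;>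
        first
          | exact zero_mem _
          | exact x_mem_I
          | exact R_zero
    have hN2 : (Matrix.single 1 0 (X 2) :
        Matrix (Fin 3) (Fin 3) (MvPolynomial (Fin 4) k)) ∈ A3alg k := by
      refine ⟨?_, ?_, ?_, ?_, ?_, ?_, ?_, ?_, ?_⟩ <;> simp [Matrix.single] <;>
        first
          | exact zero_mem _
          | exact Submodule.subset_span (by simp)
          | exact R_zero
    have hN3 : (Matrix.single 0 2 (X 0 * X 2) :
        Matrix (Fin 3) (Fin 3) (MvPolynomial (Fin 4) k)) ∈ A3alg k := by
      refine ⟨?_, ?_, ?_, ?_, ?_, ?_, ?_, ?_, ?_⟩ <;> simp [Matrix.single] <;>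
        first
          | exact zero_mem _
          | exact xz_mem_zI
          | exact R_zero
    have h1 := hc _ hN1
    have h2 := hc _ hN2
    have h3 := hc _ hN3
    have e10 := congrFun (congrFun h1 1) 1
    simp [Matrix.single, Matrix.mul_apply, Fin.sum_univ_three] at e10
    have e20 := congrFun (congrFun h1 2) 1
    simp [Matrix.single, Matrix.mul_apply, Fin.sum_univ_three] at e20
    have ed1 := congrFun (congrFun h1 0) 1
    simp [Matrix.single, Matrix.mul_apply, Fin.sum_univ_three] at ed1
    have e12 := congrFun (congrFun h1 0) 2
    simp [Matrix.single, Matrix.mul_apply, Fin.sum_univ_three] at e12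
    have e01 := congrFun (congrFun h2 0) 0
    simp [Matrix.single, Matrix.mul_apply, Fin.sum_univ_three] at e01
    have e21 := congrFun (congrFun h2 2) 0
    simp [Matrix.single, Matrix.mul_apply, Fin.sum_univ_three] at e21
    have e02 := congrFun (congrFun h2 1) 2
    simp [Matrix.single, Matrix.mul_apply, Fin.sum_univ_three] at e02
    have ed2 := congrFun (congrFun h3 0) 2
    simp [Matrix.single, Matrix.mul_apply, Fin.sum_univ_three] at ed2
    -- diagonal equalities
    have hd1 : M 0 0 = M 1 1 := by
      rw [mul_comm (X 0) (M 1 1)] at ed1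
      exact mul_right_cancel₀ (X_ne_zero _) ed1
    have hd2 : M 0 0 = M 2 2 := by
      rw [mul_comm (X 0 * X 2) (M 2 2)] at ed2
      exact mul_right_cancel₀ (mul_ne_zero (X_ne_zero _) (X_ne_zero _)) ed2
    refine ⟨M 2 2, h22, ?_⟩
    ext i j
    fin_cases i <;> fin_cases j <;>
      simp [Matrix.one_apply, e10, e20, e12, e01, e21, e02, ← hd2, hd1]
  · rintro ⟨r, hr, rfl⟩
    constructor
    · refine ⟨?_, ?_, ?_, ?_, ?_, ?_, ?_, ?_, ?_⟩ <;> simp [Matrix.one_apply] <;>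
        first
          | exact zero_mem _
          | exact R_sub_S hr
          | exact hr
    · intro N _
      rw [Matrix.smul_mul, Matrix.mul_smul, one_mul, mul_one]
end
end

section
/- Let k be a field, B = k[x,y,z,w], S = k[xz, yz, xw, yw] ⊆ B, I := xS + yS, J := zS + wS, R := k + xzS + yzS, and let A ⊆ M₃(B) be the tiled matrix algebra with entry pattern [[S, I, zI],[J, S, zS],[S, I, R]]. Let e₃ ∈ A be the matrix unit with 1 in the (3,3) slot, so that Ae₃ is the left A-module of column vectors with first entry in zI = xzS + yzS, second entry in zS, and third entry in R; Ae₃ is an R-module via scalar multiplication. Then the k-algebra homomorphism A → End_R(Ae₃) sending a ∈ A to left multiplication by a is an isomorphism. -/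
open MvPolynomial

set_option synthInstance.maxHeartbeats 1000000
set_option maxHeartbeats 1000000

noncomputable section

/-- The set of column vectors `Ae₃` with first entry in `zI`, second entry in `zS`, and
third entry in `R`. -/
def Ae3set (k : Type*) [Field k] : Set (Fin 3 → MvPolynomial (Fin 4) k) :=
  {v | v 0 ∈ zImod k ∧ v 1 ∈ zSmod k ∧ v 2 ∈ Rset k}

/-!
Grade `k[x,y,z,w]` by giving `x, y` weight `1` and `z, w` weight `-1`. Then `S` is the part of
weight `0`, `I` and `J` are the parts of weight `1` and `-1`, `zI` and `zS` consist of the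
elements of weight `0` and `-1` divisible by `z`, and `R = k + zI`. Every entry condition of `A`
and of `Ae₃` thus becomes a condition on weight and divisibility by `z`, and `A · Ae₃ ⊆ Ae₃` is a
count of weights.

Injectivity: since `B` is a domain, a matrix is determined by its products with the test vectors
`xz e₁, z e₂, e₃ ∈ Ae₃`. Surjectivity: `Ae₃` is the sum of its coordinate lines, and each
`a e_j ∈ Ae₃` satisfies `r (a e_j) = s (c_j e_j)` with `c_j e_j` the test vector and `r ≠ 0`, `s`
in `R` (`r = xz, s = a`; `r = xz, s = xa`; `r = 1, s = a`). Then `r f(a e_j) = s f(c_j e_j)`, so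
an `R`-linear `f` is left multiplication by the matrix with columns `f(xz e₁)/xz`, `f(z e₂)/z`,
`f(e₃)`, once these quotients are shown to exist in `B`. For the first column,
`yz f(xz e₁) = xz f(yz e₁)` makes `x` divide `f(xz e₁)`; for the second,
`xw f(z e₂)₃ = f(xwz e₂)₃ ∈ R` has no constant term, so `z` divides `f(z e₂)₃`. The weights of
the quotients then place them in the entries of `A`.
-/

open scoped Matrix

section WeightedHomogeneous

variable {σ R M : Type*} [CommSemiring R] [AddCommGroup M] {w : σ → M}

lemma MvPolynomial.IsWeightedHomogeneous.of_X_mul {p : MvPolynomial σ R} {i : σ} {m : M}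
    (h : IsWeightedHomogeneous w (X i * p) m) : IsWeightedHomogeneous w p (m - w i) := by
  intro d hd
  have := h (d := Finsupp.single i 1 + d) (by rwa [coeff_X_mul])
  rw [map_add, Finsupp.weight_single, one_smul] at this
  rw [← this, add_sub_cancel_left]

lemma MvPolynomial.IsWeightedHomogeneous.mul_of_add_eq {p q : MvPolynomial σ R}
    {m n l : M} (hp : IsWeightedHomogeneous w p m) (hq : IsWeightedHomogeneous w q n)
    (h : m + n = l) : IsWeightedHomogeneous w (p * q) l :=
  h ▸ hp.mul hq

end WeightedHomogeneous

namespace MvPolynomial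

variable {σ R : Type*} {i j : σ}

lemma constantCoeff_eq_zero_of_X_dvd [CommSemiring R] {p : MvPolynomial σ R} (h : X i ∣ p) :
    constantCoeff p = 0 := by
  obtain ⟨q, rfl⟩ := h
  simp

variable [CommRing R] [IsDomain R] {p : MvPolynomial σ R}

lemma X_dvd_of_X_dvd_X_mul (hij : i ≠ j) (h : X i ∣ X j * p) : X i ∣ p :=
  (X_prime.dvd_or_dvd h).resolve_left (by rwa [X_dvd_X])

lemma X_mul_X_dvd (hij : i ≠ j) (hi : X i ∣ p) (hj : X j ∣ p) : X i * X j ∣ p := by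
  obtain ⟨q, rfl⟩ := hj
  obtain ⟨r, rfl⟩ := X_dvd_of_X_dvd_X_mul hij hi
  exact ⟨r, by ring⟩

end MvPolynomial

section ColumnModules

variable {k B n : Type*} [CommSemiring k] [CommRing B] [Algebra k B]
  {R : Subalgebra k B} {N : Submodule R (n → B)}

lemma Submodule.smul_eq_smul_of_coe_eq_single [DecidableEq n] {u v : N} {r s : R} {j : n}
    {a b : B} (hu : (u : n → B) = Pi.single j a) (hv : (v : n → B) = Pi.single j b)
    (h : (r : B) * a = s * b) : r • u = s • v :=
  Subtype.ext <| by
    rw [Submodule.coe_smul, Submodule.coe_smul, hu, hv, ← Pi.single_smul', ← Pi.single_smul',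
      Subalgebra.smul_def, Subalgebra.smul_def, smul_eq_mul, smul_eq_mul, h]

lemma Module.End.smul_apply_eq_smul_apply (f : Module.End R N) {u v : N} {r s : R}
    (h : r • u = s • v) : r • (f u : n → B) = s • (f v : n → B) :=
  congrArg (fun x : N => (x : n → B)) (by rw [← map_smul, ← map_smul, h] : r • f u = s • f v)

lemma Module.End.apply_eq_mulVec_of_smul_eq [Fintype n] [IsDomain B] (f : Module.End R N)
    (M : Matrix n n B) {u v : N} {r s : R} (hr : r ≠ 0) (hrs : r • v = s • u)
    (hu : (f u : n → B) = M *ᵥ u) : (f v : n → B) = M *ᵥ v := by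
  apply smul_right_injective (n → B) (show (r : B) ≠ 0 by simpa using hr)
  show r • (f v : n → B) = r • (M *ᵥ v)
  calc r • (f v : n → B) = s • (M *ᵥ u) := by rw [← hu]; exact f.smul_apply_eq_smul_apply hrs
    _ = M *ᵥ ((s • u : N) : n → B) := (Matrix.mulVec_smul _ _ _).symm
    _ = M *ᵥ ((r • v : N) : n → B) := by rw [hrs]
    _ = r • (M *ᵥ v) := Matrix.mulVec_smul _ _ _

end ColumnModules

section MulVecEnd

variable {k B n : Type*} [CommSemiring k] [CommRing B] [Algebra k B] [Fintype n] [DecidableEq n]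
  {𝒜 : Subalgebra k (Matrix n n B)} {R : Subalgebra k B} {N : Submodule R (n → B)}

lemma Module.End.apply_eq_mulVec_of_single (f : Module.End R N) (M : Matrix n n B)
    (hN : ∀ v ∈ N, ∀ j, Pi.single j (v j) ∈ N)
    (hf : ∀ j a (ha : Pi.single j a ∈ N), (f ⟨_, ha⟩ : n → B) = M *ᵥ Pi.single j a) (v : N) :
    (f v : n → B) = M *ᵥ v := by
  have hv : v = ∑ j, ⟨Pi.single j (v.1 j), hN _ v.2 j⟩ :=
    Subtype.ext (by simp [Finset.univ_sum_single])
  conv_lhs => rw [hv]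
  rw [map_sum, Submodule.coe_sum]
  simp_rw [hf]
  rw [← Matrix.mulVec_sum, Finset.univ_sum_single]

def Subalgebra.mulVecEnd (h : ∀ M ∈ 𝒜, ∀ v ∈ N, M *ᵥ v ∈ N) : 𝒜 →ₐ[k] Module.End R N where
  toFun M :=
    { toFun v := ⟨M.1 *ᵥ v, h _ M.2 _ v.2⟩
      map_add' v w := Subtype.ext (Matrix.mulVec_add _ _ _)
      map_smul' r v := Subtype.ext (Matrix.mulVec_smul _ (r : B) _) }
  map_one' := by ext; simp
  map_mul' _ _ := by ext; simp [Matrix.mulVec_mulVec]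
  map_zero' := by ext; simp
  map_add' _ _ := by ext; simp [Matrix.add_mulVec]
  commutes' c := by ext; simp [Algebra.algebraMap_eq_smul_one, Matrix.smul_mulVec]

lemma Subalgebra.mulVecEnd_apply (h : ∀ M ∈ 𝒜, ∀ v ∈ N, M *ᵥ v ∈ N) (M : 𝒜) (v : N) :
    (𝒜.mulVecEnd h M v : n → B) = M.1 *ᵥ v := rfl

lemma Subalgebra.mulVecEnd_injective [IsDomain B] (h : ∀ M ∈ 𝒜, ∀ v ∈ N, M *ᵥ v ∈ N)
    {c : n → B} (hc : ∀ j, c j ≠ 0) (hcN : ∀ j, Pi.single j (c j) ∈ N) :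
    Function.Injective (𝒜.mulVecEnd h) := by
  intro M M' hMM'
  ext i j
  have := congrArg (fun g : Module.End R N => (g ⟨_, hcN j⟩ : n → B) i) hMM'
  simp only [mulVecEnd_apply, Matrix.mulVec_single] at this
  exact mul_right_cancel₀ (hc j) this

end MulVecEnd

namespace TiledA3

variable {k : Type*} [Field k]

local notation "𝔹" => MvPolynomial (Fin 4) k

def wt : Fin 4 → ℤ := ![1, 1, -1, -1]

lemma weight_wt (μ : Fin 4 →₀ ℕ) : Finsupp.weight wt μ = μ 0 + μ 1 - μ 2 - μ 3 := by
  simp [Finsupp.weight_eq_sum, Fin.sum_univ_four, wt, sub_eq_add_neg, add_assoc]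

lemma monomial_eq_X_pow (μ : Fin 4 →₀ ℕ) (c : k) :
    monomial μ c = C c * (X 0 ^ μ 0 * X 1 ^ μ 1 * X 2 ^ μ 2 * X 3 ^ μ 3 : 𝔹) := by
  rw [monomial_eq, Finsupp.prod_fintype _ _ (fun _ => pow_zero _), Fin.prod_univ_four]

lemma X_mul_X_mem_quadS {i j : Fin 4} (hi : i ≤ 1) (hj : 2 ≤ j) : (X i * X j : 𝔹) ∈ quadS k := by
  apply Algebra.subset_adjoin
  fin_cases i <;> fin_cases j <;> simp_all

lemma X_pow_mem_quadS {a b c d : ℕ} (h : a + b = c + d) :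
    (X 0 ^ a * X 1 ^ b * X 2 ^ c * X 3 ^ d : 𝔹) ∈ quadS k := by
  have gen (i j : Fin 4) (e : ℕ) (hi : i ≤ 1 := by decide) (hj : 2 ≤ j := by decide) :
      (X i * X j : 𝔹) ^ e ∈ quadS k :=
    pow_mem (X_mul_X_mem_quadS hi hj) e
  rcases le_total a c with hac | hca
  · obtain ⟨e, rfl⟩ := Nat.exists_eq_add_of_le hac
    obtain rfl : b = e + d := by omega
    rw [show (X 0 ^ a * X 1 ^ (e + d) * X 2 ^ (a + e) * X 3 ^ d : 𝔹)
        = (X 0 * X 2) ^ a * (X 1 * X 2) ^ e * (X 1 * X 3) ^ d by ring]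
    exact mul_mem (mul_mem (gen 0 2 a) (gen 1 2 e)) (gen 1 3 d)
  · obtain ⟨e, rfl⟩ := Nat.exists_eq_add_of_le hca
    obtain rfl : d = e + b := by omega
    rw [show (X 0 ^ (c + e) * X 1 ^ b * X 2 ^ c * X 3 ^ (e + b) : 𝔹)
        = (X 0 * X 2) ^ c * (X 0 * X 3) ^ e * (X 1 * X 3) ^ b by ring]
    exact mul_mem (mul_mem (gen 0 2 c) (gen 0 3 e)) (gen 1 3 b)

lemma mem_quadS_iff {p : 𝔹} : p ∈ quadS k ↔ IsWeightedHomogeneous wt p 0 := by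
  constructor
  · intro hp
    induction hp using Algebra.adjoin_induction with
    | mem p hp =>
      simp only [Set.mem_insert_iff, Set.mem_singleton_iff] at hp
      rcases hp with rfl | rfl | rfl | rfl <;>
        exact (isWeightedHomogeneous_X k wt _).mul_of_add_eq (isWeightedHomogeneous_X k wt _)
          (by simp [wt])
    | algebraMap c => exact isWeightedHomogeneous_C wt c
    | add p q _ _ hp hq => exact hp.add hq
    | mul p q _ _ hp hq => exact hp.mul_of_add_eq hq (add_zero 0)
  · intro hp
    induction hp using IsWeightedHomogeneous.induction_on with
    | zero => exact zero_mem _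
    | add p q _ _ hp hq => exact add_mem hp hq
    | monomial μ c hμ =>
      rw [weight_wt] at hμ
      rw [monomial_eq_X_pow]
      exact mul_mem ((quadS k).algebraMap_mem c) (X_pow_mem_quadS (by omega))

lemma mul_mem_of_mem_quadS {V : Submodule (quadS k) 𝔹} {s p : 𝔹} (hs : s ∈ quadS k)
    (hp : p ∈ V) : s * p ∈ V :=
  V.smul_mem ⟨s, hs⟩ hp

lemma isWeightedHomogeneous_of_mem_span {g : Set 𝔹} {m : ℤ}
    (hg : ∀ q ∈ g, IsWeightedHomogeneous wt q m) {p : 𝔹} (hp : p ∈ Submodule.span (quadS k) g) :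
    IsWeightedHomogeneous wt p m := by
  induction hp using Submodule.span_induction with
  | mem q hq => exact hg q hq
  | zero => exact isWeightedHomogeneous_zero k wt m
  | add p q _ _ hp hq => exact hp.add hq
  | smul s p _ hp => exact (mem_quadS_iff.1 s.2).mul_of_add_eq hp (zero_add m)

lemma monomial_mem_of_X_mem {V : Submodule (quadS k) 𝔹} {μ : Fin 4 →₀ ℕ} {i : Fin 4}
    (hμ : Finsupp.weight wt μ = wt i) (hi : μ i ≠ 0) (hV : X i ∈ V) (c : k) :
    monomial μ c ∈ V := by
  have hle : Finsupp.single i 1 ≤ μ := Finsupp.single_le_iff.2 (Nat.one_le_iff_ne_zero.2 hi)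
  have hsplit := tsub_add_cancel_of_le hle
  rw [← hsplit, ← mul_one c, ← monomial_mul]
  refine mul_mem_of_mem_quadS (mem_quadS_iff.2 (isWeightedHomogeneous_monomial _ _ _ ?_)) hV
  have := congrArg (Finsupp.weight wt) hsplit
  rw [map_add, Finsupp.weight_single, one_smul, hμ] at this
  linarith

lemma mem_of_isWeightedHomogeneous {V : Submodule (quadS k) 𝔹} {m : ℤ}
    (hV : ∀ μ : Fin 4 →₀ ℕ, Finsupp.weight wt μ = m → ∃ i, μ i ≠ 0 ∧ wt i = m ∧ X i ∈ V)
    {p : 𝔹} (hp : IsWeightedHomogeneous wt p m) : p ∈ V := by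
  induction hp using IsWeightedHomogeneous.induction_on with
  | zero => exact zero_mem _
  | add p q _ _ hp hq => exact add_mem hp hq
  | monomial μ c hμ =>
    obtain ⟨i, hi, hwi, hXi⟩ := hV μ hμ
    exact monomial_mem_of_X_mem (hμ.trans hwi.symm) hi hXi c

lemma mem_Imod_iff {p : 𝔹} : p ∈ Imod k ↔ IsWeightedHomogeneous wt p 1 := by
  refine ⟨isWeightedHomogeneous_of_mem_span fun q hq => ?_, mem_of_isWeightedHomogeneous ?_⟩
  · rcases hq with rfl | rfl <;> exact isWeightedHomogeneous_X k wt _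
  · intro μ hμ
    rw [weight_wt] at hμ
    by_cases h0 : μ 0 = 0
    · exact ⟨1, by omega, rfl, Submodule.subset_span (by simp)⟩
    · exact ⟨0, h0, rfl, Submodule.subset_span (by simp)⟩

lemma mem_Jmod_iff {p : 𝔹} : p ∈ Jmod k ↔ IsWeightedHomogeneous wt p (-1) := by
  refine ⟨isWeightedHomogeneous_of_mem_span fun q hq => ?_, mem_of_isWeightedHomogeneous ?_⟩
  · rcases hq with rfl | rfl <;> exact isWeightedHomogeneous_X k wt _
  · intro μ hμ
    rw [weight_wt] at hμ
    by_cases h2 : μ 2 = 0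
    · exact ⟨3, by omega, rfl, Submodule.subset_span (by simp)⟩
    · exact ⟨2, h2, rfl, Submodule.subset_span (by simp)⟩

lemma mem_zImod_iff {p : 𝔹} : p ∈ zImod k ↔ IsWeightedHomogeneous wt p 0 ∧ X 2 ∣ p := by
  rw [zImod, Submodule.mem_span_pair]
  constructor
  · rintro ⟨a, b, rfl⟩
    refine ⟨isWeightedHomogeneous_of_mem_span (fun q hq => ?_)
      (Submodule.mem_span_pair.2 ⟨a, b, rfl⟩), ⟨(a : 𝔹) * X 0 + (b : 𝔹) * X 1, ?_⟩⟩
    · rcases hq with rfl | rfl <;> exact (isWeightedHomogeneous_X k wt _).mul_of_add_eq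
        (isWeightedHomogeneous_X k wt _) (by simp [wt])
    · simp only [Subalgebra.smul_def]; ring
  · rintro ⟨hp, q, rfl⟩
    have hq : q ∈ Imod k := mem_Imod_iff.2 (by simpa [wt] using hp.of_X_mul)
    obtain ⟨a, b, rfl⟩ := Submodule.mem_span_pair.1 hq
    exact ⟨a, b, by simp only [Subalgebra.smul_def]; ring⟩

lemma mem_zSmod_iff {p : 𝔹} : p ∈ zSmod k ↔ IsWeightedHomogeneous wt p (-1) ∧ X 2 ∣ p := by
  rw [zSmod, Submodule.mem_span_singleton]
  constructor
  · rintro ⟨a, rfl⟩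
    rw [Subalgebra.smul_def]
    exact ⟨(mem_quadS_iff.1 a.2).mul_of_add_eq (isWeightedHomogeneous_X k wt 2) (by simp [wt]),
      dvd_mul_left _ _⟩
  · rintro ⟨hp, q, rfl⟩
    exact ⟨⟨q, mem_quadS_iff.2 (by simpa [wt] using hp.of_X_mul)⟩, mul_comm _ _⟩

lemma mem_Rset_of_mem_zImod {p : 𝔹} (hp : p ∈ zImod k) : p ∈ Rset k :=
  ⟨0, p, hp, by simp⟩

lemma one_mem_Rset : (1 : 𝔹) ∈ Rset k :=
  ⟨1, 0, zero_mem _, by simp⟩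

lemma isWeightedHomogeneous_of_mem_Rset {p : 𝔹} (hp : p ∈ Rset k) :
    IsWeightedHomogeneous wt p 0 := by
  obtain ⟨c, m, hm, rfl⟩ := hp
  exact (isWeightedHomogeneous_C wt c).add (mem_zImod_iff.1 hm).1

lemma mem_zImod_of_mem_Rset {p : 𝔹} (hp : p ∈ Rset k) (h : constantCoeff p = 0) :
    p ∈ zImod k := by
  obtain ⟨c, m, hm, rfl⟩ := hp
  have hc : c = 0 := by
    simpa [constantCoeff_eq_zero_of_X_dvd (mem_zImod_iff.1 hm).2] using h
  simpa [hc] using hm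

lemma mul_mem_zImod_of_mem_Imod {a b : 𝔹} (ha : a ∈ Imod k) (hb : b ∈ zSmod k) :
    a * b ∈ zImod k := by
  obtain ⟨hb, hbz⟩ := mem_zSmod_iff.1 hb
  exact mem_zImod_iff.2 ⟨(mem_Imod_iff.1 ha).mul_of_add_eq hb (by norm_num),
    dvd_mul_of_dvd_right hbz _⟩

lemma mul_mem_zSmod_of_mem_Jmod {a b : 𝔹} (ha : a ∈ Jmod k) (hb : b ∈ zImod k) :
    a * b ∈ zSmod k := by
  obtain ⟨hb, hbz⟩ := mem_zImod_iff.1 hb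
  exact mem_zSmod_iff.2 ⟨(mem_Jmod_iff.1 ha).mul_of_add_eq hb (by norm_num),
    dvd_mul_of_dvd_right hbz _⟩

lemma mul_mem_zImod_of_mem_Rset {a b : 𝔹} (ha : a ∈ zImod k) (hb : b ∈ Rset k) :
    a * b ∈ zImod k := by
  obtain ⟨ha, haz⟩ := mem_zImod_iff.1 ha
  exact mem_zImod_iff.2 ⟨ha.mul_of_add_eq (isWeightedHomogeneous_of_mem_Rset hb) (add_zero 0),
    dvd_mul_of_dvd_left haz _⟩

lemma mul_mem_zSmod_of_mem_Rset {a b : 𝔹} (ha : a ∈ zSmod k) (hb : b ∈ Rset k) :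
    a * b ∈ zSmod k := by
  obtain ⟨ha, haz⟩ := mem_zSmod_iff.1 ha
  exact mem_zSmod_iff.2 ⟨ha.mul_of_add_eq (isWeightedHomogeneous_of_mem_Rset hb) (add_zero _),
    dvd_mul_of_dvd_left haz _⟩

lemma mul_mem_Rset {a b : 𝔹} (ha : a ∈ Rset k) (hb : b ∈ Rset k) : a * b ∈ Rset k := by
  obtain ⟨c, m, hm, rfl⟩ := ha
  refine ⟨c * constantCoeff b, c • (b - C (constantCoeff b)) + m * b,
    add_mem (Submodule.smul_of_tower_mem _ c ?_) (mul_mem_zImod_of_mem_Rset hm hb), ?_⟩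
  · obtain ⟨c', m', hm', rfl⟩ := hb
    simpa [constantCoeff_eq_zero_of_X_dvd (mem_zImod_iff.1 hm').2] using hm'
  · simp only [map_mul, Algebra.smul_def, algebraMap_eq]
    ring

lemma add_mem_Rset {a b : 𝔹} (ha : a ∈ Rset k) (hb : b ∈ Rset k) : a + b ∈ Rset k := by
  obtain ⟨c, m, hm, rfl⟩ := ha
  obtain ⟨c', m', hm', rfl⟩ := hb
  exact ⟨c + c', m + m', add_mem hm hm', by rw [map_add]; ring⟩

lemma mulVec_mem_Ae3set {M : Matrix (Fin 3) (Fin 3) 𝔹} (hM : M ∈ A3set k)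
    {v : Fin 3 → 𝔹} (hv : v ∈ Ae3set k) : M *ᵥ v ∈ Ae3set k := by
  obtain ⟨hM00, hM01, hM02, hM10, hM11, hM12, hM20, hM21, hM22⟩ := hM
  obtain ⟨hv0, hv1, hv2⟩ := hv
  have row (i : Fin 3) : (M *ᵥ v) i = M i 0 * v 0 + M i 1 * v 1 + M i 2 * v 2 := by
    simp [Matrix.mulVec, dotProduct, Fin.sum_univ_three]
  refine ⟨?_, ?_, ?_⟩ <;> rw [row]
  · exact add_mem (add_mem (mul_mem_of_mem_quadS hM00 hv0) (mul_mem_zImod_of_mem_Imod hM01 hv1))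
      (mul_mem_zImod_of_mem_Rset hM02 hv2)
  · exact add_mem (add_mem (mul_mem_zSmod_of_mem_Jmod hM10 hv0) (mul_mem_of_mem_quadS hM11 hv1))
      (mul_mem_zSmod_of_mem_Rset hM12 hv2)
  · exact add_mem_Rset (add_mem_Rset (mem_Rset_of_mem_zImod (mul_mem_of_mem_quadS hM20 hv0))
      (mem_Rset_of_mem_zImod (mul_mem_zImod_of_mem_Imod hM21 hv1))) (mul_mem_Rset hM22 hv2)

def A3entry (k : Type*) [Field k] : Matrix (Fin 3) (Fin 3) (Set (MvPolynomial (Fin 4) k)) :=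
  !![↑(quadS k), ↑(Imod k), ↑(zImod k); ↑(Jmod k), ↑(quadS k), ↑(zSmod k);
    ↑(quadS k), ↑(Imod k), Rset k]

lemma mem_A3set_iff {M : Matrix (Fin 3) (Fin 3) 𝔹} :
    M ∈ A3set k ↔ ∀ i j, M i j ∈ A3entry k i j := by
  simp [A3set, A3entry, Fin.forall_fin_succ, and_assoc]

lemma mem_Ae3set_iff {v : Fin 3 → 𝔹} : v ∈ Ae3set k ↔ ∀ i, v i ∈ A3entry k i 2 := by
  simp [Ae3set, A3entry, Fin.forall_fin_succ]

lemma single_mem_Ae3set_iff {j : Fin 3} {a : 𝔹} :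
    Pi.single j a ∈ Ae3set k ↔ a ∈ A3entry k j 2 := by
  rw [mem_Ae3set_iff]
  refine ⟨fun h => by simpa using h j, fun h i => ?_⟩
  rcases eq_or_ne i j with rfl | hij
  · simpa using h
  · rw [Pi.single_eq_of_ne hij]
    fin_cases i <;> simp [A3entry, mem_Rset_of_mem_zImod (zero_mem (zImod k))]

def testVec (k : Type*) [Field k] : Fin 3 → MvPolynomial (Fin 4) k := ![X 0 * X 2, X 2, 1]

lemma testVec_ne_zero (j : Fin 3) : testVec k j ≠ 0 := by
  fin_cases j <;> simp [testVec, X_ne_zero]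

lemma single_testVec_mem_Ae3set (j : Fin 3) : Pi.single j (testVec k j) ∈ Ae3set k := by
  rw [single_mem_Ae3set_iff]
  fin_cases j
  exacts [Submodule.subset_span (by simp [testVec]), Submodule.subset_span rfl, one_mem_Rset]

lemma X_dvd_of_yz_mul_eq {p p' : 𝔹} (h : X 1 * X 2 * p = X 0 * X 2 * p') : X 0 ∣ p :=
  X_dvd_of_X_dvd_X_mul (j := 2) (by decide) <| X_dvd_of_X_dvd_X_mul (j := 1) (by decide)
    ⟨X 2 * p', by linear_combination h⟩

lemma X_dvd_of_xw_mul_mem_Rset {p : 𝔹} (h : X 0 * X 3 * p ∈ Rset k) : X 2 ∣ p := by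
  have hz := (mem_zImod_iff.1 (mem_zImod_of_mem_Rset h
    (constantCoeff_eq_zero_of_X_dvd (dvd_mul_of_dvd_left (dvd_mul_right _ _) _)))).2
  rw [mul_assoc] at hz
  exact X_dvd_of_X_dvd_X_mul (j := 3) (by decide) (X_dvd_of_X_dvd_X_mul (j := 0) (by decide) hz)

lemma exists_eq_mul_X {p : 𝔹} {m : ℤ} (hz : X 2 ∣ p) (hp : IsWeightedHomogeneous wt p m) :
    ∃ q, IsWeightedHomogeneous wt q (m + 1) ∧ p = q * X 2 := by
  obtain ⟨q, rfl⟩ := hz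
  exact ⟨q, by simpa [wt] using hp.of_X_mul, mul_comm _ _⟩

lemma exists_eq_mul_xz {p : 𝔹} {m : ℤ} (hx : X 0 ∣ p) (hz : X 2 ∣ p)
    (hp : IsWeightedHomogeneous wt p m) :
    ∃ q, IsWeightedHomogeneous wt q m ∧ p = q * (X 0 * X 2) := by
  obtain ⟨q, rfl⟩ := X_mul_X_dvd (by decide) hx hz
  rw [mul_assoc] at hp
  exact ⟨q, by simpa [wt] using hp.of_X_mul.of_X_mul, mul_comm _ _⟩

section Surjectivity

variable {R : Subalgebra k (MvPolynomial (Fin 4) k)}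
  {N : Submodule R (Fin 3 → MvPolynomial (Fin 4) k)}

lemma mem_of_mem_Rset (hR : (R : Set 𝔹) = Rset k) {a : 𝔹} (ha : a ∈ Rset k) : a ∈ R := by
  rwa [← SetLike.mem_coe, hR]

lemma mem_of_mem_Ae3set (hN : (N : Set (Fin 3 → 𝔹)) = Ae3set k) {v : Fin 3 → 𝔹}
    (hv : v ∈ Ae3set k) : v ∈ N := by
  rwa [← SetLike.mem_coe, hN]

lemma mem_Ae3set_of_mem (hN : (N : Set (Fin 3 → 𝔹)) = Ae3set k) (v : N) :
    (v : Fin 3 → 𝔹) ∈ Ae3set k := by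
  rw [← hN]; exact v.2

lemma exists_apply_testVec_zero_eq (hR : (R : Set 𝔹) = Rset k)
    (hN : (N : Set (Fin 3 → 𝔹)) = Ae3set k) (f : Module.End R N) {u : N}
    (hu : (u : Fin 3 → 𝔹) = Pi.single 0 (X 0 * X 2)) (i : Fin 3) :
    ∃ q ∈ A3entry k i 0, (f u : Fin 3 → 𝔹) i = q * (X 0 * X 2) := by
  have hxz : X 0 * X 2 ∈ zImod k := Submodule.subset_span (by simp)
  have hyz : X 1 * X 2 ∈ zImod k := Submodule.subset_span (by simp)
  let u' : N := ⟨Pi.single 0 (X 1 * X 2), mem_of_mem_Ae3set hN (single_mem_Ae3set_iff.2 hyz)⟩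
  have hx : X 0 ∣ (f u : Fin 3 → 𝔹) i := X_dvd_of_yz_mul_eq <| congrFun
    (f.smul_apply_eq_smul_apply (v := u')
      (r := ⟨_, mem_of_mem_Rset hR (mem_Rset_of_mem_zImod hyz)⟩)
      (s := ⟨_, mem_of_mem_Rset hR (mem_Rset_of_mem_zImod hxz)⟩)
      (Submodule.smul_eq_smul_of_coe_eq_single hu rfl (mul_comm _ _))) i
  have hfu := mem_Ae3set_iff.1 (mem_Ae3set_of_mem hN (f u)) i
  fin_cases i
  · obtain ⟨hw, hz⟩ := mem_zImod_iff.1 hfu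
    obtain ⟨q, hq, he⟩ := exists_eq_mul_xz hx hz hw
    exact ⟨q, mem_quadS_iff.2 hq, he⟩
  · obtain ⟨hw, hz⟩ := mem_zSmod_iff.1 hfu
    obtain ⟨q, hq, he⟩ := exists_eq_mul_xz hx hz hw
    exact ⟨q, mem_Jmod_iff.2 hq, he⟩
  · obtain ⟨hw, hz⟩ := mem_zImod_iff.1
      (mem_zImod_of_mem_Rset hfu (constantCoeff_eq_zero_of_X_dvd hx))
    obtain ⟨q, hq, he⟩ := exists_eq_mul_xz hx hz hw
    exact ⟨q, mem_quadS_iff.2 hq, he⟩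

lemma xw_mul_apply_mem_Rset (hR : (R : Set 𝔹) = Rset k)
    (hN : (N : Set (Fin 3 → 𝔹)) = Ae3set k) (f : Module.End R N) {u : N}
    (hu : (u : Fin 3 → 𝔹) = Pi.single 1 (X 2 : 𝔹)) :
    X 0 * X 3 * (f u : Fin 3 → 𝔹) 2 ∈ Rset k := by
  have hxw : X 0 * X 3 ∈ quadS k := X_mul_X_mem_quadS (by decide) (by decide)
  have hxz : X 0 * X 2 ∈ zImod k := Submodule.subset_span (by simp)
  let b : N := ⟨Pi.single 1 (X 0 * X 3 * X 2), mem_of_mem_Ae3set hN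
    (single_mem_Ae3set_iff.2 (mul_mem_of_mem_quadS hxw (Submodule.subset_span rfl)))⟩
  have hfb := congrFun (f.smul_apply_eq_smul_apply (u := u) (v := b)
    (r := ⟨_, mem_of_mem_Rset hR (mem_Rset_of_mem_zImod (mul_mem_of_mem_quadS hxw hxz))⟩)
    (s := ⟨_, mem_of_mem_Rset hR (mem_Rset_of_mem_zImod hxz)⟩)
    (Submodule.smul_eq_smul_of_coe_eq_single hu rfl (by ring))) 2
  have hb : X 0 * X 3 * (f u : Fin 3 → 𝔹) 2 = (f b : Fin 3 → 𝔹) 2 := by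
    refine mul_left_cancel₀ (mul_ne_zero (X_ne_zero 0) (X_ne_zero 2)) ?_
    simp only [Pi.smul_apply, Subalgebra.smul_def, smul_eq_mul] at hfb
    linear_combination hfb
  rw [hb]
  exact mem_Ae3set_iff.1 (mem_Ae3set_of_mem hN (f b)) 2

lemma exists_apply_testVec_one_eq (hR : (R : Set 𝔹) = Rset k)
    (hN : (N : Set (Fin 3 → 𝔹)) = Ae3set k) (f : Module.End R N) {u : N}
    (hu : (u : Fin 3 → 𝔹) = Pi.single 1 (X 2 : 𝔹)) (i : Fin 3) :
    ∃ q ∈ A3entry k i 1, (f u : Fin 3 → 𝔹) i = q * X 2 := by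
  have hfu := mem_Ae3set_iff.1 (mem_Ae3set_of_mem hN (f u)) i
  fin_cases i
  · obtain ⟨hw, hz⟩ := mem_zImod_iff.1 hfu
    obtain ⟨q, hq, he⟩ := exists_eq_mul_X hz hw
    exact ⟨q, mem_Imod_iff.2 hq, he⟩
  · obtain ⟨hw, hz⟩ := mem_zSmod_iff.1 hfu
    obtain ⟨q, hq, he⟩ := exists_eq_mul_X hz hw
    exact ⟨q, mem_quadS_iff.2 hq, he⟩
  · obtain ⟨q, hq, he⟩ := exists_eq_mul_X
      (X_dvd_of_xw_mul_mem_Rset (xw_mul_apply_mem_Rset hR hN f hu))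
      (isWeightedHomogeneous_of_mem_Rset hfu)
    exact ⟨q, mem_Imod_iff.2 hq, he⟩

lemma exists_mulVec_eq (hR : (R : Set 𝔹) = Rset k) (hN : (N : Set (Fin 3 → 𝔹)) = Ae3set k)
    (f : Module.End R N) : ∃ M ∈ A3set k, ∀ v : N, (f v : Fin 3 → 𝔹) = M *ᵥ v := by
  have hxz : X 0 * X 2 ∈ zImod k := Submodule.subset_span (by simp)
  have hxzR : X 0 * X 2 ∈ R := mem_of_mem_Rset hR (mem_Rset_of_mem_zImod hxz)
  have hxz0 : (⟨X 0 * X 2, hxzR⟩ : R) ≠ 0 :=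
    fun h => mul_ne_zero (X_ne_zero 0) (X_ne_zero 2) (congrArg Subtype.val h)
  let u (j : Fin 3) : N := ⟨_, mem_of_mem_Ae3set hN (single_testVec_mem_Ae3set j)⟩
  choose c₀ hc₀ hfc₀ using exists_apply_testVec_zero_eq hR hN f (u := u 0) rfl
  choose c₁ hc₁ hfc₁ using exists_apply_testVec_one_eq hR hN f (u := u 1) rfl
  let M : Matrix (Fin 3) (Fin 3) 𝔹 := Matrix.of fun i => ![c₀ i, c₁ i, (f (u 2) : Fin 3 → 𝔹) i]
  refine ⟨M, mem_A3set_iff.2 fun i j => ?_, f.apply_eq_mulVec_of_single M ?_ ?_⟩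
  · fin_cases j
    exacts [hc₀ i, hc₁ i, mem_Ae3set_iff.1 (mem_Ae3set_of_mem hN _) i]
  · intro v hv j
    exact mem_of_mem_Ae3set hN <| single_mem_Ae3set_iff.2 <|
      mem_Ae3set_iff.1 (mem_Ae3set_of_mem hN ⟨v, hv⟩) j
  · intro j a ha
    have ha' := single_mem_Ae3set_iff.1 (mem_Ae3set_of_mem hN ⟨_, ha⟩)
    fin_cases j
    · refine f.apply_eq_mulVec_of_smul_eq M (u := u 0)
        (s := ⟨a, mem_of_mem_Rset hR (mem_Rset_of_mem_zImod ha')⟩) hxz0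
        (Submodule.smul_eq_smul_of_coe_eq_single rfl rfl (mul_comm _ _)) ?_
      funext i; rw [hfc₀]; simp [u, testVec, M]
    · refine f.apply_eq_mulVec_of_smul_eq M (u := u 1) (s := ⟨X 0 * a, mem_of_mem_Rset hR
        (mem_Rset_of_mem_zImod (mul_mem_zImod_of_mem_Imod (Submodule.subset_span (by simp)) ha'))⟩)
        hxz0 (Submodule.smul_eq_smul_of_coe_eq_single rfl rfl (show X 0 * X 2 * a = X 0 * a * X 2 by ring)) ?_
      funext i; rw [hfc₁]; simp [u, testVec, M]
    · refine f.apply_eq_mulVec_of_smul_eq M (u := u 2) (r := 1)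
        (s := ⟨a, mem_of_mem_Rset hR ha'⟩) one_ne_zero
        (Submodule.smul_eq_smul_of_coe_eq_single rfl rfl (by simp [testVec])) ?_
      funext i; simp [u, testVec, M]

end Surjectivity

end TiledA3

open TiledA3 in
/-- with `A` the tiled matrix algebra `[[S, I, zI], [J, S, zS], [S, I, R]]`
and `Ae₃` the left `A`-module of column vectors `(zI, zS, R)ᵀ`, viewed as an `R`-module,
the `k`-algebra homomorphism `A → End_R(Ae₃)` sending `a` to left multiplication by `a`
is an isomorphism. -/
theorem A3_iso_End (k : Type*) [Field k]
    (𝒜 : Subalgebra k (Matrix (Fin 3) (Fin 3) (MvPolynomial (Fin 4) k)))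
    (h𝒜 : (𝒜 : Set (Matrix (Fin 3) (Fin 3) (MvPolynomial (Fin 4) k))) = A3set k)
    (R : Subalgebra k (MvPolynomial (Fin 4) k))
    (hR : (R : Set (MvPolynomial (Fin 4) k)) = Rset k)
    (N : Submodule ↥R (Fin 3 → MvPolynomial (Fin 4) k))
    (hN : (N : Set (Fin 3 → MvPolynomial (Fin 4) k)) = Ae3set k) :
    ∃ Φ : ↥𝒜 ≃ₐ[k] Module.End ↥R ↥N,
      ∀ (M : ↥𝒜) (v : ↥N),
        ((Φ M v : Fin 3 → MvPolynomial (Fin 4) k))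
          = (M : Matrix (Fin 3) (Fin 3) (MvPolynomial (Fin 4) k)).mulVec ↑v := by
  have hmaps : ∀ M ∈ 𝒜, ∀ v ∈ N, M *ᵥ v ∈ N := fun M hM v hv =>
    mem_of_mem_Ae3set hN <| mulVec_mem_Ae3set (by rwa [← SetLike.mem_coe, h𝒜] at hM)
      (mem_Ae3set_of_mem hN ⟨v, hv⟩)
  have hinj := 𝒜.mulVecEnd_injective hmaps testVec_ne_zero
    fun j => mem_of_mem_Ae3set hN (single_testVec_mem_Ae3set j)
  have hsurj : Function.Surjective (𝒜.mulVecEnd hmaps) := fun f => by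
    obtain ⟨M, hM, hf⟩ := exists_mulVec_eq hR hN f
    exact ⟨⟨M, by rwa [← SetLike.mem_coe, h𝒜]⟩, LinearMap.ext fun v => Subtype.ext (hf v).symm⟩
  exact ⟨AlgEquiv.ofBijective _ ⟨hinj, hsurj⟩, fun M v => rfl⟩
end
end

section
/- Let k be a field, B = k[x,y,z,w], S = k[xz, yz, xw, yw] ⊆ B, I := xS + yS, J := zS + wS, and R := k + x²zwS + xyzwS + y²zwS (a k-subalgebra of S). Then the set A of all 4×4 matrices over B with entry pattern [[S, I, zI, wI],[J, S, zS, wS],[S, I, k + zI, wI],[S, I, zI, k + wI]] (where zI = xzS + yzS, wI = xwS + ywS, and k + zI and k + wI denote the indicated k-subalgebras of S) is a unital k-subalgebra of M₄(B), and its center equals R·1₄ = { r·1₄ : r ∈ R }. -/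
open MvPolynomial

noncomputable section

/-- `wI = xwS + ywS` as an `S`-submodule of `B`. -/
def wImod (k : Type*) [Field k] : Submodule ↥(quadS k) (MvPolynomial (Fin 4) k) :=
  Submodule.span ↥(quadS k) ({X 0 * X 3, X 1 * X 3} : Set (MvPolynomial (Fin 4) k))

/-- `wS` as an `S`-submodule of `B`. -/
def wSmod (k : Type*) [Field k] : Submodule ↥(quadS k) (MvPolynomial (Fin 4) k) :=
  Submodule.span ↥(quadS k) ({X 3} : Set (MvPolynomial (Fin 4) k))

/-- `zwI² = x²zwS + xyzwS + y²zwS` as an `S`-submodule of `B`. -/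
def zwI2mod (k : Type*) [Field k] : Submodule ↥(quadS k) (MvPolynomial (Fin 4) k) :=
  Submodule.span ↥(quadS k)
    ({X 0 ^ 2 * X 2 * X 3, X 0 * X 1 * X 2 * X 3, X 1 ^ 2 * X 2 * X 3} :
      Set (MvPolynomial (Fin 4) k))

/-- `k + zI` as a subset of `B`. -/
def kzIset (k : Type*) [Field k] : Set (MvPolynomial (Fin 4) k) :=
  {b | ∃ c : k, ∃ m ∈ zImod k, b = algebraMap k (MvPolynomial (Fin 4) k) c + m}

/-- `k + wI` as a subset of `B`. -/
def kwIset (k : Type*) [Field k] : Set (MvPolynomial (Fin 4) k) :=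
  {b | ∃ c : k, ∃ m ∈ wImod k, b = algebraMap k (MvPolynomial (Fin 4) k) c + m}

/-- `R = k + x²zwS + xyzwS + y²zwS` as a subset of `B`. -/
def R4set (k : Type*) [Field k] : Set (MvPolynomial (Fin 4) k) :=
  {b | ∃ c : k, ∃ m ∈ zwI2mod k, b = algebraMap k (MvPolynomial (Fin 4) k) c + m}

/-- The set of `4 × 4` matrices over `B` with entry pattern
`[[S, I, zI, wI], [J, S, zS, wS], [S, I, k + zI, wI], [S, I, zI, k + wI]]`. -/
def A4set (k : Type*) [Field k] : Set (Matrix (Fin 4) (Fin 4) (MvPolynomial (Fin 4) k)) :=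
  {M | M 0 0 ∈ quadS k ∧ M 0 1 ∈ Imod k ∧ M 0 2 ∈ zImod k ∧ M 0 3 ∈ wImod k ∧
       M 1 0 ∈ Jmod k ∧ M 1 1 ∈ quadS k ∧ M 1 2 ∈ zSmod k ∧ M 1 3 ∈ wSmod k ∧
       M 2 0 ∈ quadS k ∧ M 2 1 ∈ Imod k ∧ M 2 2 ∈ kzIset k ∧ M 2 3 ∈ wImod k ∧
       M 3 0 ∈ quadS k ∧ M 3 1 ∈ Imod k ∧ M 3 2 ∈ zImod k ∧ M 3 3 ∈ kwIset k}

/-!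
Every module in the pattern is spanned by monomials, and among the monomials `x^a y^b z^c w^d` it
is cut out by the value of the degree `a + b - c - d` together with lower bounds on `c` and `d`.
The `(i, j)` entry has degree `f i - f j` with `f = (0, -1, 0, 0)`, its lower bound depends on `j`
only (`c ≥ 1` in column 2, `d ≥ 1` in column 3), and the diagonal also admits constants. Exponent
sets of this graded shape add up like matrix units, so the matrices form an algebra. A matrix
commuting with `E₀₀`, `z E₁₀`, `E₂₀` and `E₃₀` is scalar, `r • 1`, with `r` in every diagonal
entry, and `S ∩ (k + zI) ∩ (k + wI) = k + zwI²`.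
-/

open scoped Pointwise

namespace Matrix

variable {n α : Type*} [Fintype n] [DecidableEq n]

theorem col_eq_zero_of_commute_single_of_ne_zero [Semiring α] [NoZeroDivisors α] {i j l : n}
    {c : α} {M : Matrix n n α} (hM : Commute (single i j c) M) (hc : c ≠ 0) (hli : l ≠ i) :
    M l i = 0 := by
  have := ext_iff.mpr hM l j
  simp_all

theorem diag_eq_of_commute_single_of_ne_zero [CommSemiring α] [IsLeftCancelMulZero α] {i j : n}
    {c : α} {M : Matrix n n α} (hM : Commute (single i j c) M) (hc : c ≠ 0) :
    M i i = M j j := by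
  have := ext_iff.mpr hM i j
  simp only [single_mul_apply_same, mul_single_apply_same] at this
  exact (mul_left_cancel₀ hc (this.trans (mul_comm _ _))).symm

end Matrix

section MonomialSpan

variable {σ k : Type*}

theorem toSubmodule_adjoin_monomial [CommSemiring k] (G : Set (σ →₀ ℕ)) :
    Subalgebra.toSubmodule (Algebra.adjoin k ((monomial · (1 : k)) '' G)) =
      restrictSupport k (AddSubmonoid.closure G) := by
  rw [Algebra.adjoin_eq_span, restrictSupport_eq_span]
  apply le_antisymm
  · rw [Submodule.span_le, ← restrictSupport_eq_span]
    intro p hp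
    induction hp using Submonoid.closure_induction with
    | mem p hp =>
      obtain ⟨g, hg, rfl⟩ := hp
      exact (monomial_mem_restrictSupport k).2 (Or.inl (AddSubmonoid.subset_closure hg))
    | one => exact (monomial_mem_restrictSupport k).2 (Or.inl (zero_mem _))
    | mul p q _ _ hp hq =>
      refine restrictSupport_mono k ?_
        ((restrictSupport_add k _ _).symm ▸ Submodule.mul_mem_mul hp hq)
      rw [Set.add_subset_iff]
      exact fun _ hm _ hn => add_mem hm hn
  · refine Submodule.span_mono ?_
    rintro _ ⟨g, hg, rfl⟩
    induction hg using AddSubmonoid.closure_induction with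
    | mem g hg => exact Submonoid.subset_closure ⟨g, hg, rfl⟩
    | zero => exact one_mem _
    | add g h _ _ hg hh =>
      beta_reduce at hg hh ⊢
      rw [show monomial (g + h) (1 : k) = monomial g 1 * monomial h 1 by simp]
      exact mul_mem hg hh

theorem mem_span_monomial_iff [CommSemiring k] {A : Subalgebra k (MvPolynomial σ k)}
    {C : AddSubmonoid (σ →₀ ℕ)} (hA : Subalgebra.toSubmodule A = restrictSupport k C)
    (H : Set (σ →₀ ℕ)) {p : MvPolynomial σ k} :
    p ∈ Submodule.span A ((monomial · (1 : k)) '' H) ↔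
      p ∈ restrictSupport k ((C : Set (σ →₀ ℕ)) + H) := by
  have hA' (a : A) : (a : MvPolynomial σ k) ∈ restrictSupport k C := hA ▸ a.2
  constructor
  · intro hp
    induction hp using Submodule.span_induction with
    | mem p hp =>
      obtain ⟨h, hh, rfl⟩ := hp
      exact (monomial_mem_restrictSupport k).2 (Or.inl ⟨0, zero_mem _, h, hh, zero_add h⟩)
    | zero => exact zero_mem _
    | add p q _ _ hp hq => exact add_mem hp hq
    | smul a p _ hp =>
      refine restrictSupport_mono k ?_ ((restrictSupport_add k _ _).symm ▸
        Submodule.mul_mem_mul (hA' a) hp)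
      rw [← add_assoc]
      exact Set.add_subset_add_right (Set.add_subset_iff.2 fun _ hm _ hn => add_mem hm hn)
  · rw [restrictSupport_eq_span]
    refine fun hp => (Submodule.span_le (p := (Submodule.span A _).restrictScalars k)).2 ?_ hp
    rintro _ ⟨_, ⟨c, hc, h, hh, rfl⟩, rfl⟩
    have hcA : monomial c (1 : k) ∈ A := by
      rw [← Subalgebra.mem_toSubmodule, hA]
      exact (monomial_mem_restrictSupport k).2 (Or.inl hc)
    change monomial (c + h) (1 : k) ∈ Submodule.span A _
    rw [show monomial (c + h) (1 : k) = monomial c 1 * monomial h 1 by simp]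
    exact Submodule.smul_mem _ (⟨_, hcA⟩ : A) (Submodule.subset_span ⟨h, hh, rfl⟩)

theorem exists_algebraMap_add_mem_restrictSupport_iff [CommRing k] {s : Set (σ →₀ ℕ)}
    {p : MvPolynomial σ k} :
    (∃ c : k, ∃ q ∈ restrictSupport k s, p = algebraMap k _ c + q) ↔
      p ∈ restrictSupport k (insert 0 s) := by
  constructor
  · rintro ⟨c, q, hq, rfl⟩
    have hC : algebraMap k (MvPolynomial σ k) c ∈ restrictSupport k (insert 0 s) :=
      (monomial_mem_restrictSupport k).2 (Or.inl (Set.mem_insert _ _))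
    exact add_mem hC (restrictSupport_mono k (Set.subset_insert _ _) hq)
  · classical
    intro hp
    refine ⟨coeff 0 p, p - C (coeff 0 p), (mem_restrictSupport_iff k).2 fun m hm => ?_,
      by simp [algebraMap_eq]⟩
    have hm' := mem_support_iff.1 (Finset.mem_coe.1 hm)
    rw [coeff_sub, coeff_C] at hm'
    split_ifs at hm' with h0
    · exact absurd (sub_self _) (h0 ▸ hm')
    · exact ((mem_restrictSupport_iff k).1 hp (mem_support_iff.2 (by simpa using hm'))).resolve_left
        (Ne.symm h0)

theorem mem_mker_add_iff {G : Type*} [AddCancelCommMonoid G] {d : (σ →₀ ℕ) →+ G}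
    {H : Set (σ →₀ ℕ)} {m : σ →₀ ℕ} :
    m ∈ (AddMonoidHom.mker d : Set (σ →₀ ℕ)) + H ↔ ∃ h ∈ H, h ≤ m ∧ d m = d h := by
  constructor
  · rintro ⟨c, hc, h, hh, rfl⟩
    refine ⟨h, hh, le_add_self, ?_⟩
    rw [map_add, AddMonoidHom.mem_mker.1 hc, zero_add]
  · rintro ⟨h, hh, hle, hd⟩
    refine ⟨m - h, ?_, h, hh, tsub_add_cancel_of_le hle⟩
    rw [SetLike.mem_coe, AddMonoidHom.mem_mker, ← add_right_cancel_iff (a := d h), ← map_add,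
      tsub_add_cancel_of_le hle, hd, zero_add]

end MonomialSpan

section Pattern

variable {σ ι : Type*} [Fintype ι] [DecidableEq ι] (k : Type*)

def patternSubalgebra [CommSemiring k] (P : ι → ι → Set (σ →₀ ℕ)) (hP₀ : ∀ i, 0 ∈ P i i)
    (hP : ∀ i l j, P i l + P l j ⊆ P i j) : Subalgebra k (Matrix ι ι (MvPolynomial σ k)) where
  carrier := {M | ∀ i j, M i j ∈ restrictSupport k (P i j)}
  mul_mem' {M N} hM hN i j := Submodule.sum_mem _ fun l _ =>
    restrictSupport_mono k (hP i l j) <| (restrictSupport_add k _ _).symm ▸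
      Submodule.mul_mem_mul (hM i l) (hN l j)
  add_mem' hM hN i j := add_mem (hM i j) (hN i j)
  algebraMap_mem' r i j := by
    rw [Matrix.algebraMap_matrix_apply]
    split_ifs with h
    · subst h
      exact (monomial_mem_restrictSupport k).2 (Or.inl (hP₀ i))
    · exact zero_mem _

variable {k} {P : ι → ι → Set (σ →₀ ℕ)} {hP₀ : ∀ i, 0 ∈ P i i}
  {hP : ∀ i l j, P i l + P l j ⊆ P i j}

theorem single_mem_patternSubalgebra [CommSemiring k] {i j : ι} {c : MvPolynomial σ k}
    (hc : c ∈ restrictSupport k (P i j)) :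
    Matrix.single i j c ∈ patternSubalgebra k P hP₀ hP := by
  intro a b
  rw [Matrix.single_apply]
  split_ifs with h
  · obtain ⟨rfl, rfl⟩ := h
    exact hc
  · exact zero_mem _

theorem mem_patternSubalgebra_and_commute_iff [CommRing k] [IsDomain k] (i₀ : ι)
    (hcol : ∀ i ≠ i₀, (P i i₀).Nonempty) {M : Matrix ι ι (MvPolynomial σ k)} :
    (M ∈ patternSubalgebra k P hP₀ hP ∧ ∀ N ∈ patternSubalgebra k P hP₀ hP, M * N = N * M) ↔
      ∃ r, (∀ i, r ∈ restrictSupport k (P i i)) ∧ M = r • 1 := by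
  constructor
  · rintro ⟨hM, hcomm⟩
    have htest : ∀ i, ∃ c ≠ 0, Matrix.single i i₀ c ∈ patternSubalgebra k P hP₀ hP := by
      intro i
      obtain ⟨m, hm⟩ : (P i i₀).Nonempty := by
        by_cases hi : i = i₀
        · exact hi ▸ ⟨0, hP₀ i⟩
        · exact hcol i hi
      exact ⟨monomial m 1, by simp, single_mem_patternSubalgebra (by simp [hm])⟩
    have hoff : ∀ i, ∀ l ≠ i, M l i = 0 := fun i l hli => by
      obtain ⟨c, hc, hN⟩ := htest i
      exact Matrix.col_eq_zero_of_commute_single_of_ne_zero (hcomm _ hN).symm hc hli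
    have hdiag : ∀ i, M i i = M i₀ i₀ := fun i => by
      obtain ⟨c, hc, hN⟩ := htest i
      exact Matrix.diag_eq_of_commute_single_of_ne_zero (hcomm _ hN).symm hc
    refine ⟨M i₀ i₀, fun i => hdiag i ▸ hM i i, Matrix.ext fun a b => ?_⟩
    by_cases hab : a = b
    · subst hab
      simp [hdiag]
    · simp [hoff b a hab, hab]
  · rintro ⟨r, hr, rfl⟩
    refine ⟨fun i j => ?_, fun N _ => by rw [Matrix.smul_mul, one_mul, Matrix.mul_smul, mul_one]⟩
    by_cases hij : i = j
    · subst hij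
      simpa using hr i
    · simp [hij]

end Pattern

section GradedPattern

variable {σ ι G : Type*}

def levelSetAbove [AddZeroClass G] (d : (σ →₀ ℕ) →+ G) (e : G) (β : σ →₀ ℕ) :
    Set (σ →₀ ℕ) :=
  {m | d m = e ∧ β ≤ m}

def gradedPattern [AddCommGroup G] [DecidableEq ι] (d : (σ →₀ ℕ) →+ G) (f : ι → G)
    (β : ι → σ →₀ ℕ) (i j : ι) : Set (σ →₀ ℕ) :=
  if i = j then insert 0 (levelSetAbove d (f i - f j) (β j)) else levelSetAbove d (f i - f j) (β j)

section AddCommMonoid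

variable [AddCommMonoid G] {d : (σ →₀ ℕ) →+ G}

theorem zero_mem_levelSetAbove_zero : (0 : σ →₀ ℕ) ∈ levelSetAbove d 0 0 :=
  ⟨map_zero d, le_rfl⟩

theorem coe_mker_eq_levelSetAbove :
    (AddMonoidHom.mker d : Set (σ →₀ ℕ)) = levelSetAbove d 0 0 :=
  Set.ext fun m => by simp [levelSetAbove]

theorem levelSetAbove_add_subset (e₁ e₂ : G) (β₁ β₂ : σ →₀ ℕ) :
    levelSetAbove d e₁ β₁ + levelSetAbove d e₂ β₂ ⊆ levelSetAbove d (e₁ + e₂) (β₁ + β₂) := by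
  rw [Set.add_subset_iff]
  rintro m ⟨hdm, hβm⟩ n ⟨hdn, hβn⟩
  exact ⟨by rw [map_add, hdm, hdn], add_le_add hβm hβn⟩

end AddCommMonoid

variable [AddCommGroup G] [DecidableEq ι] {d : (σ →₀ ℕ) →+ G} {f : ι → G} {β : ι → σ →₀ ℕ}

theorem mem_gradedPattern {i j : ι} {m : σ →₀ ℕ} :
    m ∈ gradedPattern d f β i j ↔ (i = j ∧ m = 0) ∨ m ∈ levelSetAbove d (f i - f j) (β j) := by
  unfold gradedPattern
  split_ifs with h <;> simp [h]

theorem zero_mem_gradedPattern (i : ι) : 0 ∈ gradedPattern d f β i i :=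
  mem_gradedPattern.2 (Or.inl ⟨rfl, rfl⟩)

theorem gradedPattern_add_subset (i l j : ι) :
    gradedPattern d f β i l + gradedPattern d f β l j ⊆ gradedPattern d f β i j := by
  rw [Set.add_subset_iff]
  intro m hm n hn
  rcases mem_gradedPattern.1 hm with ⟨rfl, rfl⟩ | hm
  · rwa [zero_add]
  rcases mem_gradedPattern.1 hn with ⟨rfl, rfl⟩ | hn
  · rwa [add_zero]
  refine mem_gradedPattern.2 (Or.inr ?_)
  obtain ⟨hd, hβ⟩ := levelSetAbove_add_subset _ _ _ _ (Set.add_mem_add hm hn)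
  exact ⟨by rw [hd]; abel, le_add_self.trans hβ⟩

end GradedPattern

open Finsupp (single)

def segreDegree : (Fin 4 →₀ ℕ) →+ ℤ := Finsupp.weight ![1, 1, -1, -1]

theorem segreDegree_apply (m : Fin 4 →₀ ℕ) : segreDegree m = m 0 + m 1 - m 2 - m 3 := by
  simp [segreDegree, Finsupp.weight_apply, Finsupp.sum_fintype, Fin.sum_univ_four]
  ring

theorem closure_segreExponents_eq_mker :
    AddSubmonoid.closure {single 0 1 + single 2 1, single 1 1 + single 2 1,
      single 0 1 + single 3 1, single 1 1 + single 3 1} = AddMonoidHom.mker segreDegree := by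
  apply le_antisymm
  · rw [AddSubmonoid.closure_le]
    simp [Set.insert_subset_iff, segreDegree_apply]
  · intro m hm
    rw [AddMonoidHom.mem_mker, segreDegree_apply] at hm
    -- pair each `x` with a `z` as long as possible
    have hm' : m = min (m 0) (m 2) • (single 0 1 + single 2 1) +
        (m 2 - min (m 0) (m 2)) • (single 1 1 + single 2 1) +
        (m 0 - min (m 0) (m 2)) • (single 0 1 + single 3 1) +
        (m 1 - (m 2 - min (m 0) (m 2))) • (single 1 1 + single 3 1) := by
      ext i
      fin_cases i <;> simp <;> omega
    rw [hm']
    refine add_mem (add_mem (add_mem ?_ ?_) ?_) ?_ <;>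
      exact nsmul_mem (AddSubmonoid.subset_closure (by simp)) _

section Segre

variable {k : Type*} [Field k]

theorem toSubmodule_quadS :
    Subalgebra.toSubmodule (quadS k) = restrictSupport k (AddMonoidHom.mker segreDegree) := by
  rw [quadS, ← closure_segreExponents_eq_mker, ← toSubmodule_adjoin_monomial]
  simp [Set.image_insert_eq, X]

theorem mem_quadS_iff {p : MvPolynomial (Fin 4) k} :
    p ∈ quadS k ↔ p ∈ restrictSupport k (levelSetAbove segreDegree 0 0) := by
  rw [← Subalgebra.mem_toSubmodule, toSubmodule_quadS, coe_mker_eq_levelSetAbove]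

theorem mem_span_quadS_iff {H : Set (Fin 4 →₀ ℕ)} {e : ℤ} {β : Fin 4 →₀ ℕ}
    (hH : ∀ m, (∃ h ∈ H, h ≤ m ∧ segreDegree m = segreDegree h) ↔ segreDegree m = e ∧ β ≤ m)
    {p : MvPolynomial (Fin 4) k} :
    p ∈ Submodule.span (quadS k) ((monomial · (1 : k)) '' H) ↔
      p ∈ restrictSupport k (levelSetAbove segreDegree e β) := by
  rw [mem_span_monomial_iff toSubmodule_quadS,
    show (AddMonoidHom.mker segreDegree : Set (Fin 4 →₀ ℕ)) + H = levelSetAbove segreDegree e β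
      from Set.ext fun m => mem_mker_add_iff.trans (hH m)]

theorem mem_Imod_iff {p : MvPolynomial (Fin 4) k} :
    p ∈ Imod k ↔ p ∈ restrictSupport k (levelSetAbove segreDegree 1 0) := by
  rw [Imod, show ({X 0, X 1} : Set (MvPolynomial (Fin 4) k)) =
    (monomial · 1) '' {single 0 1, single 1 1} by simp [Set.image_insert_eq, X]]
  refine mem_span_quadS_iff fun m => ?_
  simp [segreDegree_apply, Finsupp.le_def, Fin.forall_fin_succ]
  omega

theorem mem_Jmod_iff {p : MvPolynomial (Fin 4) k} :
    p ∈ Jmod k ↔ p ∈ restrictSupport k (levelSetAbove segreDegree (-1) 0) := by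
  rw [Jmod, show ({X 2, X 3} : Set (MvPolynomial (Fin 4) k)) =
    (monomial · 1) '' {single 2 1, single 3 1} by simp [Set.image_insert_eq, X]]
  refine mem_span_quadS_iff fun m => ?_
  simp [segreDegree_apply, Finsupp.le_def, Fin.forall_fin_succ]
  omega

theorem mem_zImod_iff {p : MvPolynomial (Fin 4) k} :
    p ∈ zImod k ↔ p ∈ restrictSupport k (levelSetAbove segreDegree 0 (single 2 1)) := by
  rw [zImod, show ({X 0 * X 2, X 1 * X 2} : Set (MvPolynomial (Fin 4) k)) =
    (monomial · 1) '' {single 0 1 + single 2 1, single 1 1 + single 2 1} by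
      simp [Set.image_insert_eq, X]]
  refine mem_span_quadS_iff fun m => ?_
  simp [segreDegree_apply, Finsupp.le_def, Fin.forall_fin_succ]
  omega

theorem mem_wImod_iff {p : MvPolynomial (Fin 4) k} :
    p ∈ wImod k ↔ p ∈ restrictSupport k (levelSetAbove segreDegree 0 (single 3 1)) := by
  rw [wImod, show ({X 0 * X 3, X 1 * X 3} : Set (MvPolynomial (Fin 4) k)) =
    (monomial · 1) '' {single 0 1 + single 3 1, single 1 1 + single 3 1} by
      simp [Set.image_insert_eq, X]]
  refine mem_span_quadS_iff fun m => ?_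
  simp [segreDegree_apply, Finsupp.le_def, Fin.forall_fin_succ]
  omega

theorem mem_zSmod_iff {p : MvPolynomial (Fin 4) k} :
    p ∈ zSmod k ↔ p ∈ restrictSupport k (levelSetAbove segreDegree (-1) (single 2 1)) := by
  rw [zSmod, show ({X 2} : Set (MvPolynomial (Fin 4) k)) =
    (monomial · 1) '' {single 2 1} by simp [X]]
  refine mem_span_quadS_iff fun m => ?_
  simp [segreDegree_apply, Finsupp.le_def, Fin.forall_fin_succ]
  omega

theorem mem_wSmod_iff {p : MvPolynomial (Fin 4) k} :
    p ∈ wSmod k ↔ p ∈ restrictSupport k (levelSetAbove segreDegree (-1) (single 3 1)) := by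
  rw [wSmod, show ({X 3} : Set (MvPolynomial (Fin 4) k)) =
    (monomial · 1) '' {single 3 1} by simp [X]]
  refine mem_span_quadS_iff fun m => ?_
  simp [segreDegree_apply, Finsupp.le_def, Fin.forall_fin_succ]
  omega

theorem mem_zwI2mod_iff {p : MvPolynomial (Fin 4) k} :
    p ∈ zwI2mod k ↔
      p ∈ restrictSupport k (levelSetAbove segreDegree 0 (single 2 1 + single 3 1)) := by
  rw [zwI2mod, show ({X 0 ^ 2 * X 2 * X 3, X 0 * X 1 * X 2 * X 3, X 1 ^ 2 * X 2 * X 3} :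
      Set (MvPolynomial (Fin 4) k)) = (monomial · 1) '' {single 0 2 + single 2 1 + single 3 1,
        single 0 1 + single 1 1 + single 2 1 + single 3 1, single 1 2 + single 2 1 + single 3 1} by
    simp only [X_pow_eq_monomial]
    simp [Set.image_insert_eq, X]]
  refine mem_span_quadS_iff fun m => ?_
  simp [segreDegree_apply, Finsupp.le_def, Fin.forall_fin_succ]
  omega

theorem mem_kzIset_iff {p : MvPolynomial (Fin 4) k} :
    p ∈ kzIset k ↔ p ∈ restrictSupport k (insert 0 (levelSetAbove segreDegree 0 (single 2 1))) := by
  simp only [kzIset, Set.mem_ofPred_eq, mem_zImod_iff]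
  exact exists_algebraMap_add_mem_restrictSupport_iff

theorem mem_kwIset_iff {p : MvPolynomial (Fin 4) k} :
    p ∈ kwIset k ↔ p ∈ restrictSupport k (insert 0 (levelSetAbove segreDegree 0 (single 3 1))) := by
  simp only [kwIset, Set.mem_ofPred_eq, mem_wImod_iff]
  exact exists_algebraMap_add_mem_restrictSupport_iff

theorem mem_R4set_iff {p : MvPolynomial (Fin 4) k} :
    p ∈ R4set k ↔ p ∈ restrictSupport k
      (insert 0 (levelSetAbove segreDegree 0 (single 2 1 + single 3 1))) := by
  simp only [R4set, Set.mem_ofPred_eq, mem_zwI2mod_iff]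
  exact exists_algebraMap_add_mem_restrictSupport_iff

end Segre

def A4pattern : Fin 4 → Fin 4 → Set (Fin 4 →₀ ℕ) :=
  gradedPattern segreDegree ![0, -1, 0, 0] ![0, 0, single 2 1, single 3 1]

def A4subalgebra (k : Type*) [Field k] :
    Subalgebra k (Matrix (Fin 4) (Fin 4) (MvPolynomial (Fin 4) k)) :=
  patternSubalgebra k A4pattern zero_mem_gradedPattern gradedPattern_add_subset

theorem coe_A4subalgebra {k : Type*} [Field k] :
    (A4subalgebra k : Set (Matrix (Fin 4) (Fin 4) (MvPolynomial (Fin 4) k))) = A4set k := by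
  ext M
  simp only [A4set, Set.mem_ofPred_eq, mem_quadS_iff, mem_Imod_iff, mem_Jmod_iff, mem_zImod_iff,
    mem_wImod_iff, mem_zSmod_iff, mem_wSmod_iff, mem_kzIset_iff, mem_kwIset_iff]
  simp [A4subalgebra, patternSubalgebra, Fin.forall_fin_succ, A4pattern, gradedPattern,
    Set.insert_eq_of_mem zero_mem_levelSetAbove_zero, and_assoc]

theorem iInter_A4pattern_diag :
    ⋂ i, A4pattern i i = insert 0 (levelSetAbove segreDegree 0 (single 2 1 + single 3 1)) := by
  ext m
  simp [Fin.forall_fin_succ, A4pattern, gradedPattern, levelSetAbove, Finsupp.le_def,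
    segreDegree_apply]
  tauto

theorem mem_R4set_iff_forall_diag {k : Type*} [Field k]
    {p : MvPolynomial (Fin 4) k} :
    p ∈ R4set k ↔ ∀ i, p ∈ restrictSupport k (A4pattern i i) := by
  rw [mem_R4set_iff, ← iInter_A4pattern_diag]
  exact Set.subset_iInter_iff

theorem A4pattern_col_zero_nonempty : ∀ i ≠ 0, (A4pattern i 0).Nonempty := by
  intro i hi
  fin_cases i
  · exact absurd rfl hi
  · exact ⟨single 2 1, by simp [A4pattern, gradedPattern, levelSetAbove, segreDegree_apply]⟩
  · exact ⟨0, by simp [A4pattern, gradedPattern, levelSetAbove]⟩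
  · exact ⟨0, by simp [A4pattern, gradedPattern, levelSetAbove]⟩

/-- the set of matrices with entry pattern
`[[S, I, zI, wI], [J, S, zS, wS], [S, I, k + zI, wI], [S, I, zI, k + wI]]` is a unital
`k`-subalgebra of `M₄(B)`, and its center equals `R·1₄` where `R = k + zwI²`. -/
theorem A4_subalgebra_center (k : Type*) [Field k] :
    ∃ 𝒜 : Subalgebra k (Matrix (Fin 4) (Fin 4) (MvPolynomial (Fin 4) k)),
      (𝒜 : Set (Matrix (Fin 4) (Fin 4) (MvPolynomial (Fin 4) k))) = A4set k ∧
      {M | M ∈ 𝒜 ∧ ∀ N ∈ 𝒜, M * N = N * M}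
        = {M | ∃ r ∈ R4set k,
            M = r • (1 : Matrix (Fin 4) (Fin 4) (MvPolynomial (Fin 4) k))} := by
  refine ⟨A4subalgebra k, coe_A4subalgebra, Set.ext fun M => ?_⟩
  simp only [Set.mem_ofPred_eq, mem_R4set_iff_forall_diag]
  exact mem_patternSubalgebra_and_commute_iff 0 A4pattern_col_zero_nonempty
end
end
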